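/- arXiv:1906.05247 — 5 statements merged into one kernel-verified Lean document; each statement's English description precedes it below -/
import Mathlib

section
/- Let n ≥ 1 and let y_1, …, y_n be i.i.d. real random variables with mean μ, each symmetric about μ, and let w_1, …, w_n be i.i.d. Rademacher random variables independent of (y_1, …, y_n). Let α, δ ∈ (0,1), and let φ : ℝ^n → [0,∞) be a measurable function such that P(|ȳ_n − μ| ≥ φ(y_1,…,y_n)) ≤ α. Then P( ȳ_n − μ > q_{α(1−δ)}(y − ȳ_n) + sqrt(2·log(2/(αδ))/n) · φ(y_1,…,y_n) ) ≤ 2α. -/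
open MeasureTheory ProbabilityTheory Real

/-- The Rademacher distribution on `ℝ`: `+1` and `-1` each with probability `1/2`. -/
noncomputable def radMeasure : Measure ℝ :=
  (2⁻¹ : ENNReal) • Measure.dirac 1 + (2⁻¹ : ENNReal) • Measure.dirac (-1)

/-- The law of `n` i.i.d. Rademacher weights. -/
noncomputable def radPi (n : ℕ) : Measure (Fin n → ℝ) :=
  Measure.pi fun _ => radMeasure

/-- The Rademacher multiplier bootstrap quantile
`q_α(v) = inf {x : P_w(n⁻¹ ∑ i, w i * v i > x) ≤ α}`. -/
noncomputable def bootQuantile (n : ℕ) (v : Fin n → ℝ) (α : ℝ) : ℝ :=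
  sInf {x : ℝ | radPi n {w | (∑ i, w i * v i) / n > x} ≤ ENNReal.ofReal α}

instance : IsProbabilityMeasure radMeasure := by
  constructor
  simp [radMeasure, ENNReal.inv_two_add_inv_two]

instance (n : ℕ) : IsProbabilityMeasure (radPi n) := by
  unfold radPi; infer_instance

lemma radMeasure_signs : radMeasure ({1, -1} : Set ℝ) = 1 := by
  simp [radMeasure, Measure.dirac_apply, Set.indicator, ENNReal.inv_two_add_inv_two]

def sgns (n : ℕ) : Set (Fin n → ℝ) := {w | ∀ i, w i = 1 ∨ w i = -1}

lemma sgns_eq (n : ℕ) : sgns n = Set.univ.pi (fun _ : Fin n => ({1, -1} : Set ℝ)) := by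
  ext w; simp [sgns, Set.mem_pi]

lemma sgns_meas (n : ℕ) : MeasurableSet (sgns n) := by
  rw [sgns_eq]
  exact MeasurableSet.univ_pi fun i => (measurableSet_singleton (-1)).insert 1

lemma radPi_sgns (n : ℕ) : radPi n (sgns n) = 1 := by
  rw [sgns_eq, radPi, Measure.pi_pi]
  simp [radMeasure_signs]

lemma radPi_sgns_compl (n : ℕ) : radPi n (sgns n)ᶜ = 0 := by
  rw [measure_compl (sgns_meas n) (measure_ne_top _ _), radPi_sgns, measure_univ, tsub_self]

/-- abbreviation for the bootstrap survival function -/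
noncomputable def Fv (n : ℕ) (v : Fin n → ℝ) (x : ℝ) : ENNReal :=
  radPi n {w | (∑ i, w i * v i) / n > x}

lemma Fv_anti {n : ℕ} (v : Fin n → ℝ) : Antitone (Fv n v) := by
  intro x x' h
  exact measure_mono fun w hw => lt_of_le_of_lt h hw

lemma abs_sum_le_of_sgns {n : ℕ} {v w : Fin n → ℝ} (hw : w ∈ sgns n) :
    |∑ i, w i * v i| ≤ ∑ i, |v i| := by
  refine (Finset.abs_sum_le_sum_abs _ _).trans (Finset.sum_le_sum fun i _ => ?_)
  rcases hw i with h | h <;> simp [h, abs_neg]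

lemma Fv_eq_zero {n : ℕ} (v : Fin n → ℝ) {x : ℝ} (hx : (∑ i, |v i|) / n ≤ x) :
    Fv n v x = 0 := by
  refine le_antisymm ?_ zero_le
  rw [← radPi_sgns_compl n]
  refine measure_mono fun w hw => ?_
  simp only [Set.mem_setOf_eq] at hw
  intro hws
  have h1 : (∑ i, w i * v i) / n ≤ (∑ i, |v i|) / n := by
    rw [div_eq_mul_inv, div_eq_mul_inv]
    exact mul_le_mul_of_nonneg_right ((le_abs_self _).trans (abs_sum_le_of_sgns hws))
      (inv_nonneg.mpr (Nat.cast_nonneg n))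
  exact absurd (lt_of_le_of_lt (h1.trans hx) hw) (lt_irrefl _)

lemma Fv_eq_one {n : ℕ} (v : Fin n → ℝ) {x : ℝ} (hx : x < -((∑ i, |v i|) / n)) :
    Fv n v x = 1 := by
  refine le_antisymm (prob_le_one) ?_
  rw [← radPi_sgns n]
  refine measure_mono fun w hw => ?_
  have h1 : -((∑ i, |v i|) / n) ≤ (∑ i, w i * v i) / n := by
    rw [← neg_div, div_eq_mul_inv, div_eq_mul_inv]
    exact mul_le_mul_of_nonneg_right (neg_le_of_abs_le (abs_sum_le_of_sgns hw))
      (inv_nonneg.mpr (Nat.cast_nonneg n))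
  exact lt_of_lt_of_le hx h1

def qSet (n : ℕ) (v : Fin n → ℝ) (a : ℝ) : Set ℝ :=
  {x | Fv n v x ≤ ENNReal.ofReal a}

lemma bootQuantile_eq_sInf (n : ℕ) (v : Fin n → ℝ) (a : ℝ) :
    bootQuantile n v a = sInf (qSet n v a) := rfl

lemma qSet_nonempty {n : ℕ} (v : Fin n → ℝ) {a : ℝ} :
    (qSet n v a).Nonempty :=
  ⟨(∑ i, |v i|) / n, by simp [qSet, Fv_eq_zero v le_rfl]⟩

lemma qSet_upward {n : ℕ} {v : Fin n → ℝ} {a x x' : ℝ} (hx : x ∈ qSet n v a)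
    (h : x ≤ x') : x' ∈ qSet n v a :=
  le_trans (Fv_anti v h) hx

lemma qSet_bddBelow {n : ℕ} (v : Fin n → ℝ) {a : ℝ} (ha1 : a < 1) :
    BddBelow (qSet n v a) := by
  refine ⟨-((∑ i, |v i|) / n) - 1, fun x hx => ?_⟩
  by_contra hlt
  push_neg at hlt
  have h1 : Fv n v x = 1 := Fv_eq_one v (by linarith)
  have h2 : ENNReal.ofReal a < 1 := ENNReal.ofReal_lt_one.mpr ha1
  rw [qSet, Set.mem_setOf_eq, h1] at hx
  exact absurd (lt_of_le_of_lt hx h2) (lt_irrefl _)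

lemma bootQuantile_le {n : ℕ} {v : Fin n → ℝ} {a t : ℝ} (ha1 : a < 1)
    (h : Fv n v t ≤ ENNReal.ofReal a) : bootQuantile n v a ≤ t :=
  csInf_le (qSet_bddBelow v ha1) h

lemma Fv_bootQuantile_le {n : ℕ} (v : Fin n → ℝ) {a : ℝ} (ha1 : a < 1) :
    Fv n v (bootQuantile n v a) ≤ ENNReal.ofReal a := by
  set q := bootQuantile n v a with hq
  have hmem : ∀ k : ℕ, q + 1 / (k + 1) ∈ qSet n v a := by
    intro k
    have hpos : (0 : ℝ) < 1 / (k + 1) := by positivity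
    have : sInf (qSet n v a) < q + 1 / (k + 1) := by
      rw [← bootQuantile_eq_sInf]; linarith
    obtain ⟨x, hx, hxlt⟩ := (csInf_lt_iff (qSet_bddBelow v ha1) (qSet_nonempty v)).mp this
    exact qSet_upward hx hxlt.le
  have hset : {w : Fin n → ℝ | (∑ i, w i * v i) / n > q}
      = ⋃ k : ℕ, {w | (∑ i, w i * v i) / n > q + 1 / (k + 1)} := by
    ext w
    simp only [Set.mem_setOf_eq, Set.mem_iUnion]
    constructor
    · intro h
      obtain ⟨k, hk⟩ := exists_nat_one_div_lt (sub_pos.mpr h)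
      exact ⟨k, by push_cast at hk ⊢; linarith⟩
    · rintro ⟨k, hk⟩
      have hpos : (0 : ℝ) < 1 / (k + 1) := by positivity
      linarith
  have hdir : Directed (· ⊆ ·) (fun k : ℕ => {w : Fin n → ℝ | (∑ i, w i * v i) / n > q + 1 / (k + 1)}) := by
    refine (Monotone.directed_le ?_)
    intro k k' hk w hw
    simp only [Set.mem_setOf_eq] at hw ⊢
    have hkk : (k : ℝ) ≤ k' := Nat.cast_le.mpr hk
    have : (1 : ℝ) / (k' + 1) ≤ 1 / (k + 1) := by
      apply one_div_le_one_div_of_le (by positivity)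
      linarith
    linarith
  calc Fv n v q = ⨆ k : ℕ, radPi n {w | (∑ i, w i * v i) / n > q + 1 / (k + 1)} := by
        rw [Fv, hset, hdir.measure_iUnion]
    _ ≤ ENNReal.ofReal a := iSup_le fun k => hmem k

lemma radMeasure_map_mul {c : ℝ} (hc : c = 1 ∨ c = -1) :
    Measure.map (fun x => c * x) radMeasure = radMeasure := by
  rcases hc with rfl | rfl
  · simp only [one_mul]
    exact Measure.map_id
  · have hm : Measurable fun x : ℝ => (-1 : ℝ) * x := (measurable_id.const_mul _)
    rw [radMeasure, Measure.map_add _ _ hm, Measure.map_smul, Measure.map_smul,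
      Measure.map_dirac' hm, Measure.map_dirac' hm]
    norm_num [radMeasure, add_comm]

lemma radPi_map_mul {n : ℕ} {s : Fin n → ℝ} (hs : s ∈ sgns n) :
    Measure.map (fun w i => s i * w i) (radPi n) = radPi n := by
  have hm : Measurable fun (w : Fin n → ℝ) i => s i * w i :=
    measurable_pi_lambda _ fun i => by fun_prop
  refine (Measure.pi_eq fun t ht => ?_).symm
  rw [Measure.map_apply hm (MeasurableSet.univ_pi ht)]
  have hpre : (fun (w : Fin n → ℝ) i => s i * w i) ⁻¹' Set.univ.pi t
      = Set.univ.pi (fun i => (fun x => s i * x) ⁻¹' t i) := by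
    ext w; simp [Set.mem_pi]
  rw [hpre, radPi, Measure.pi_pi]
  refine Finset.prod_congr rfl fun i _ => ?_
  rw [← Measure.map_apply (measurable_const_mul (s i)) (ht i), radMeasure_map_mul (hs i)]

lemma Fv_flip {n : ℕ} {s : Fin n → ℝ} (hs : s ∈ sgns n) (v : Fin n → ℝ) (x : ℝ) :
    Fv n (fun i => s i * v i) x = Fv n v x := by
  have hm : Measurable fun (w : Fin n → ℝ) i => s i * w i :=
    measurable_pi_lambda _ fun i => by fun_prop
  have hms : MeasurableSet {w : Fin n → ℝ | (∑ i, w i * v i) / n > x} := by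
    refine measurableSet_lt measurable_const (Measurable.div_const ?_ _)
    exact Finset.measurable_sum _ fun i _ => by fun_prop
  calc Fv n (fun i => s i * v i) x
      = radPi n ((fun (w : Fin n → ℝ) i => s i * w i) ⁻¹' {w | (∑ i, w i * v i) / n > x}) := by
        rw [Fv]
        congr 1
        ext w
        simp only [Set.mem_setOf_eq, Set.mem_preimage]
        constructor <;> intro h <;> refine lt_of_lt_of_eq h ?_ <;> congr 1 <;>
          exact Finset.sum_congr rfl fun i _ => by ring
    _ = radPi n {w | (∑ i, w i * v i) / n > x} := by
        rw [← Measure.map_apply hm hms, radPi_map_mul hs]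
    _ = Fv n v x := rfl

lemma bootQuantile_flip {n : ℕ} {s : Fin n → ℝ} (hs : s ∈ sgns n) (v : Fin n → ℝ) (a : ℝ) :
    bootQuantile n (fun i => s i * v i) a = bootQuantile n v a := by
  rw [bootQuantile_eq_sInf, bootQuantile_eq_sInf]
  congr 1
  ext x
  simp only [qSet, Set.mem_setOf_eq, Fv_flip hs]

lemma measurable_Fv {n : ℕ} (x : ℝ) : Measurable fun v : Fin n → ℝ => Fv n v x := by
  have hms : MeasurableSet {p : (Fin n → ℝ) × (Fin n → ℝ) | (∑ i, p.2 i * p.1 i) / n > x} := by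
    refine measurableSet_lt measurable_const (Measurable.div_const ?_ _)
    exact Finset.measurable_sum _ fun i _ =>
      ((measurable_pi_apply i).comp measurable_snd).mul ((measurable_pi_apply i).comp measurable_fst)
  exact measurable_measure_prodMk_left hms

lemma measurable_bootQuantile {n : ℕ} {a : ℝ} (ha1 : a < 1) :
    Measurable fun v : Fin n → ℝ => bootQuantile n v a := by
  refine measurable_of_Iio fun t => ?_
  have : (fun v : Fin n → ℝ => bootQuantile n v a) ⁻¹' Set.Iio t
      = ⋃ (r : ℚ) (_ : (r : ℝ) < t), {v : Fin n → ℝ | Fv n v r ≤ ENNReal.ofReal a} := by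
    ext v
    simp only [Set.mem_preimage, Set.mem_Iio, Set.mem_iUnion, Set.mem_setOf_eq]
    constructor
    · intro h
      rw [bootQuantile_eq_sInf] at h
      obtain ⟨x, hx, hxlt⟩ := (csInf_lt_iff (qSet_bddBelow v ha1) (qSet_nonempty v)).mp h
      obtain ⟨r, hr1, hr2⟩ := exists_rat_btwn hxlt
      exact ⟨r, hr2, qSet_upward hx hr1.le⟩
    · rintro ⟨r, hr, hFr⟩
      exact lt_of_le_of_lt (bootQuantile_le ha1 hFr) hr
  rw [this]
  exact MeasurableSet.iUnion fun r => MeasurableSet.iUnion fun _ =>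
    measurableSet_le (measurable_Fv _) measurable_const

lemma radMeasure_compl_signs : radMeasure (({1, -1} : Set ℝ)ᶜ) = 0 := by
  rw [measure_compl ((measurableSet_singleton (-1)).insert 1) (measure_ne_top _ _),
    radMeasure_signs, measure_univ, tsub_self]

lemma radMeasure_ae {p : ℝ → Prop} (h1 : p 1) (h2 : p (-1)) :
    ∀ᵐ x ∂radMeasure, p x := by
  rw [Filter.eventually_iff, mem_ae_iff]
  refine measure_mono_null (fun x hx => ?_) radMeasure_compl_signs
  simp only [Set.mem_compl_iff, Set.mem_setOf_eq, not_not] at hx ⊢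
  rintro (rfl | rfl) <;> [exact hx h1; exact hx h2]

lemma radPi_ae {n : ℕ} {p : (Fin n → ℝ) → Prop} (h : ∀ w ∈ sgns n, p w) :
    ∀ᵐ w ∂radPi n, p w := by
  rw [Filter.eventually_iff, mem_ae_iff]
  refine measure_mono_null (fun w hw => ?_) (radPi_sgns_compl n)
  simp only [Set.mem_compl_iff, Set.mem_setOf_eq, not_not] at hw ⊢
  exact fun hs => hw (h w hs)

lemma integrable_dirac' {f : ℝ → ℝ} (hf : StronglyMeasurable f) (a : ℝ) :
    Integrable f (Measure.dirac a) := by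
  refine (integrable_const (f a)).congr ?_
  rw [Filter.EventuallyEq, ae_dirac_eq]
  exact Filter.eventually_pure.mpr rfl

lemma radMeasure_integral (f : ℝ → ℝ) (hf : StronglyMeasurable f) :
    ∫ x, f x ∂radMeasure = (f 1 + f (-1)) / 2 := by
  have h1 : Integrable f ((2⁻¹ : ENNReal) • Measure.dirac (1 : ℝ)) :=
    (integrable_dirac' hf 1).smul_measure (by norm_num)
  have h2 : Integrable f ((2⁻¹ : ENNReal) • Measure.dirac (-1 : ℝ)) :=
    (integrable_dirac' hf (-1)).smul_measure (by norm_num)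
  rw [radMeasure, integral_add_measure h1 h2, integral_smul_measure, integral_smul_measure,
    integral_dirac' f 1 hf, integral_dirac' f (-1) hf]
  rw [ENNReal.toReal_inv]
  norm_num
  ring

def RR : Type := ℝ

instance : MeasurableSpace RR := (inferInstance : MeasurableSpace ℝ)

noncomputable instance : MeasureSpace RR := ⟨radMeasure⟩

instance : IsProbabilityMeasure (volume : Measure RR) :=
  (inferInstance : IsProbabilityMeasure radMeasure)

instance : SigmaFinite (volume : Measure RR) := by infer_instance

lemma radPi_eq_volume (n : ℕ) : radPi n = (volume : Measure (Fin n → RR)) := by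
  rw [MeasureTheory.volume_pi]; rfl

lemma rad_mgf (n : ℕ) (t : ℝ) :
    mgf (fun w : Fin n → ℝ => ∑ i, w i) (radPi n) t = (Real.cosh t) ^ n := by
  have h1 : (fun w : Fin n → ℝ => rexp (t * ∑ i, w i))
      = fun w => ∏ i, rexp (t * w i) := by
    funext w
    rw [Finset.mul_sum, Real.exp_sum]
  have hint : ∫ x, rexp (t * x) ∂radMeasure = Real.cosh t := by
    rw [radMeasure_integral _ (Continuous.stronglyMeasurable (by continuity)), Real.cosh_eq]
    norm_num
  have h2 := MeasureTheory.integral_fintype_prod_volume_eq_pow (𝕜 := ℝ) (ι := Fin n)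
    (fun y : RR => (fun x : ℝ => rexp (t * x)) y)
  have h5 : ∫ w, ∏ i, rexp (t * w i) ∂(radPi n) = (∫ x, rexp (t * x) ∂radMeasure) ^ n := by
    rw [radPi_eq_volume n]
    refine h2.trans ?_
    rw [Fintype.card_fin]
    rfl
  rw [mgf, h1, h5, hint]

lemma rad_exp_integrable (n : ℕ) (t : ℝ) :
    Integrable (fun w : Fin n → ℝ => rexp (t * ∑ i, w i)) (radPi n) := by
  have hmeas : Measurable fun w : Fin n → ℝ => rexp (t * ∑ i, w i) := by
    apply Real.measurable_exp.comp
    exact (Finset.measurable_sum _ fun i _ => measurable_pi_apply i).const_mul t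
  refine (integrable_const (rexp (|t| * n))).mono' hmeas.aestronglyMeasurable ?_
  refine radPi_ae fun w hw => ?_
  have h1 : |∑ i, w i| ≤ n := by
    calc |∑ i, w i| ≤ ∑ i : Fin n, |w i| := Finset.abs_sum_le_sum_abs _ _
    _ = ∑ i : Fin n, 1 := Finset.sum_congr rfl fun i _ => by rcases hw i with h | h <;> simp [h]
    _ = n := by simp
  rw [Real.norm_eq_abs, abs_exp]
  apply Real.exp_le_exp.mpr
  calc t * ∑ i, w i ≤ |t * ∑ i, w i| := le_abs_self _
    _ = |t| * |∑ i, w i| := abs_mul _ _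
    _ ≤ |t| * n := by
        exact mul_le_mul_of_nonneg_left h1 (abs_nonneg t)

lemma rad_chernoff (n : ℕ) {c : ℝ} (hc : 0 ≤ c) :
    radPi n {w : Fin n → ℝ | (n : ℝ) * c ≤ ∑ i, w i} ≤
      ENNReal.ofReal (rexp (-(n * c ^ 2) / 2)) := by
  have h := measure_ge_le_exp_mul_mgf (μ := radPi n) (X := fun w : Fin n → ℝ => ∑ i, w i)
    ((n : ℝ) * c) hc (rad_exp_integrable n c)
  rw [rad_mgf n c] at h
  have hbound : rexp (-c * ((n : ℝ) * c)) * Real.cosh c ^ n ≤ rexp (-(n * c ^ 2) / 2) := by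
    have h1 : Real.cosh c ^ n ≤ rexp (c ^ 2 / 2) ^ n :=
      pow_le_pow_left₀ (Real.cosh_pos c).le (Real.cosh_le_exp_half_sq c) n
    calc rexp (-c * ((n : ℝ) * c)) * Real.cosh c ^ n
        ≤ rexp (-c * ((n : ℝ) * c)) * rexp (c ^ 2 / 2) ^ n := by
          exact mul_le_mul_of_nonneg_left h1 (Real.exp_nonneg _)
      _ = rexp (-(n * c ^ 2) / 2) := by
          rw [← Real.exp_nat_mul, ← Real.exp_add]
          congr 1
          ring
  calc radPi n {w : Fin n → ℝ | (n : ℝ) * c ≤ ∑ i, w i}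
      = ENNReal.ofReal ((radPi n {w : Fin n → ℝ | (n : ℝ) * c ≤ ∑ i, w i}).toReal) :=
        (ENNReal.ofReal_toReal (measure_ne_top _ _)).symm
    _ ≤ ENNReal.ofReal (rexp (-(n * c ^ 2) / 2)) :=
        ENNReal.ofReal_le_ofReal (h.trans hbound)

lemma rad_hoeffding (n : ℕ) {c : ℝ} (hc : 0 ≤ c) :
    radPi n {w : Fin n → ℝ | (n : ℝ) * c ≤ |∑ i, w i|} ≤
      ENNReal.ofReal (2 * rexp (-(n * c ^ 2) / 2)) := by
  have hneg : radPi n {w : Fin n → ℝ | (n : ℝ) * c ≤ -∑ i, w i}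
      = radPi n {w : Fin n → ℝ | (n : ℝ) * c ≤ ∑ i, w i} := by
    have hs : (fun _ : Fin n => (-1 : ℝ)) ∈ sgns n := fun i => Or.inr rfl
    have hms : MeasurableSet {w : Fin n → ℝ | (n : ℝ) * c ≤ ∑ i, w i} :=
      measurableSet_le measurable_const (Finset.measurable_sum _ fun i _ => measurable_pi_apply i)
    have hm : Measurable fun (w : Fin n → ℝ) i => (fun _ : Fin n => (-1:ℝ)) i * w i :=
      measurable_pi_lambda _ fun i => (measurable_pi_apply i).const_mul _
    conv_rhs => rw [← radPi_map_mul hs]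
    rw [Measure.map_apply hm hms]
    congr 1
    ext w
    simp only [Set.mem_setOf_eq, Set.mem_preimage]
    rw [show ∑ i : Fin n, (-1 : ℝ) * w i = -∑ i, w i by rw [← Finset.sum_neg_distrib]; exact Finset.sum_congr rfl fun i _ => by ring]
  have hsub : {w : Fin n → ℝ | (n : ℝ) * c ≤ |∑ i, w i|} ⊆
      {w : Fin n → ℝ | (n : ℝ) * c ≤ ∑ i, w i} ∪ {w : Fin n → ℝ | (n : ℝ) * c ≤ -∑ i, w i} := by
    intro w hw
    rcases le_abs.mp (Set.mem_setOf_eq ▸ hw) with h | h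
    · exact Or.inl h
    · exact Or.inr h
  calc radPi n {w : Fin n → ℝ | (n : ℝ) * c ≤ |∑ i, w i|}
      ≤ radPi n {w : Fin n → ℝ | (n : ℝ) * c ≤ ∑ i, w i}
        + radPi n {w : Fin n → ℝ | (n : ℝ) * c ≤ -∑ i, w i} :=
        le_trans (measure_mono hsub) (measure_union_le _ _)
    _ ≤ ENNReal.ofReal (rexp (-(n * c ^ 2) / 2)) + ENNReal.ofReal (rexp (-(n * c ^ 2) / 2)) := by
        rw [hneg]
        exact add_le_add (rad_chernoff n hc) (rad_chernoff n hc)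
    _ = ENNReal.ofReal (2 * rexp (-(n * c ^ 2) / 2)) := by
        rw [← ENNReal.ofReal_add (Real.exp_nonneg _) (Real.exp_nonneg _)]
        ring_nf

lemma iIndepFun_map_pi {Ω : Type*} [MeasurableSpace Ω] {P : Measure Ω} [IsProbabilityMeasure P]
    {n : ℕ} {f : Fin n → Ω → ℝ} (hmeas : ∀ i, Measurable (f i))
    (hindep : iIndepFun f P) :
    Measure.map (fun ω i => f i ω) P = Measure.pi (fun i => Measure.map (f i) P) := by
  haveI : ∀ i, IsProbabilityMeasure (Measure.map (f i) P) :=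
    fun i => Measure.isProbabilityMeasure_map (hmeas i).aemeasurable
  have hvec : Measurable fun ω (i : Fin n) => f i ω :=
    measurable_pi_lambda _ fun i => hmeas i
  refine (Measure.pi_eq fun s hs => ?_).symm
  rw [Measure.map_apply hvec (MeasurableSet.univ_pi hs)]
  have hpre : (fun ω (i : Fin n) => f i ω) ⁻¹' Set.univ.pi s = ⋂ i ∈ Finset.univ, f i ⁻¹' s i := by
    ext ω; simp [Set.mem_pi]
  rw [hpre, hindep.measure_inter_preimage_eq_mul Finset.univ (fun i _ => hs i)]
  exact Finset.prod_congr rfl fun i _ => (Measure.map_apply (hmeas i) (hs i)).symm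

section Claims

variable {Ω : Type*} [MeasurableSpace Ω] {P : Measure Ω} [IsProbabilityMeasure P]
  {n : ℕ} {μ : ℝ} {y : Fin n → Ω → ℝ}

/-- the flip-about-μ invariance of the common coordinate law -/
lemma kappa_flip (hymeas : ∀ i, Measurable (y i))
    (hysym : ∀ i, Measure.map (fun ω => y i ω - μ) P = Measure.map (fun ω => μ - y i ω) P)
    (i : Fin n) :
    Measure.map (fun x : ℝ => 2 * μ - x) (Measure.map (y i) P) = Measure.map (y i) P := by
  have hm2 : Measurable fun x : ℝ => 2 * μ - x := (measurable_const.sub measurable_id)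
  have hma : Measurable fun x : ℝ => x + μ := (measurable_id.add_const μ)
  have h := congrArg (Measure.map (fun x : ℝ => x + μ)) (hysym i)
  rw [Measure.map_map hma ((hymeas i).sub_const μ),
    Measure.map_map hma (by fun_prop : Measurable fun ω => μ - y i ω)] at h
  have e1 : (fun x : ℝ => x + μ) ∘ (fun ω => y i ω - μ) = y i := by funext ω; simp
  have e2 : (fun x : ℝ => x + μ) ∘ (fun ω => μ - y i ω) = fun ω => 2 * μ - y i ω := by
    funext ω; simp; ring
  rw [e1, e2] at h
  rw [Measure.map_map hm2 (hymeas i)]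
  rw [show (fun x : ℝ => 2 * μ - x) ∘ y i = fun ω => 2 * μ - y i ω from rfl]
  exact h.symm

lemma coord_pres (hymeas : ∀ i, Measurable (y i))
    (hysym : ∀ i, Measure.map (fun ω => y i ω - μ) P = Measure.map (fun ω => μ - y i ω) P)
    (i : Fin n) {c : ℝ} (hc : c = 1 ∨ c = -1) :
    Measure.map (fun x : ℝ => μ + c * (x - μ)) (Measure.map (y i) P) = Measure.map (y i) P := by
  rcases hc with rfl | rfl
  · have : (fun x : ℝ => μ + 1 * (x - μ)) = id := by funext x; simp
    rw [this, Measure.map_id]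
  · have : (fun x : ℝ => μ + (-1) * (x - μ)) = fun x : ℝ => 2 * μ - x := by funext x; ring_nf
    rw [this]
    exact kappa_flip hymeas hysym i

lemma nu_map_T (hymeas : ∀ i, Measurable (y i))
    (hysym : ∀ i, Measure.map (fun ω => y i ω - μ) P = Measure.map (fun ω => μ - y i ω) P)
    {s : Fin n → ℝ} (hs : s ∈ sgns n) :
    Measure.map (fun (v : Fin n → ℝ) i => μ + s i * (v i - μ))
      (Measure.pi fun i => Measure.map (y i) P) = Measure.pi fun i => Measure.map (y i) P := by
  haveI : ∀ i, IsProbabilityMeasure (Measure.map (y i) P) :=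
    fun i => Measure.isProbabilityMeasure_map (hymeas i).aemeasurable
  have hm : Measurable fun (v : Fin n → ℝ) i => μ + s i * (v i - μ) :=
    measurable_pi_lambda _ fun i => by fun_prop
  refine (Measure.pi_eq fun t ht => ?_).symm
  rw [Measure.map_apply hm (MeasurableSet.univ_pi ht)]
  have hpre : (fun (v : Fin n → ℝ) i => μ + s i * (v i - μ)) ⁻¹' Set.univ.pi t
      = Set.univ.pi (fun i => (fun x => μ + s i * (x - μ)) ⁻¹' t i) := by
    ext v; simp [Set.mem_pi]
  rw [hpre, Measure.pi_pi]
  refine Finset.prod_congr rfl fun i _ => ?_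
  rw [← Measure.map_apply (show Measurable fun x : ℝ => μ + s i * (x - μ) by fun_prop) (ht i),
    coord_pres hymeas hysym i (hs i)]

end Claims

section Claims2

variable {Ω : Type*} [MeasurableSpace Ω] {P : Measure Ω} [IsProbabilityMeasure P]
  {n : ℕ} {μ : ℝ} {y : Fin n → Ω → ℝ}

lemma measurable_Q {a : ℝ} (ha1 : a < 1) (μ : ℝ) :
    Measurable fun v : Fin n → ℝ => bootQuantile n (fun i => v i - μ) a := by
  exact (measurable_bootQuantile ha1).comp
    (measurable_pi_lambda _ fun i => by fun_prop)

lemma sym_bound (hymeas : ∀ i, Measurable (y i))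
    (hysym : ∀ i, Measure.map (fun ω => y i ω - μ) P = Measure.map (fun ω => μ - y i ω) P)
    {a : ℝ} (ha0 : 0 ≤ a) (ha1 : a < 1) :
    (Measure.pi fun i => Measure.map (y i) P)
      {v : Fin n → ℝ | (∑ i, (v i - μ)) / n > bootQuantile n (fun i => v i - μ) a}
      ≤ ENNReal.ofReal a := by
  haveI : ∀ i, IsProbabilityMeasure (Measure.map (y i) P) :=
    fun i => Measure.isProbabilityMeasure_map (hymeas i).aemeasurable
  set ν := Measure.pi fun i => Measure.map (y i) P with hν
  set Q : (Fin n → ℝ) → ℝ := fun v => bootQuantile n (fun i => v i - μ) a with hQ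
  have hQm : Measurable Q := measurable_Q ha1 μ
  set G : Set ((Fin n → ℝ) × (Fin n → ℝ)) :=
    {p | (∑ i, p.2 i * (p.1 i - μ)) / n > Q p.1} with hG
  have hGm : MeasurableSet G := by
    refine measurableSet_lt (hQm.comp measurable_fst) (Measurable.div_const ?_ _)
    exact Finset.measurable_sum _ fun i _ =>
      ((measurable_pi_apply i).comp measurable_snd).mul
        (by fun_prop)
  -- Step 1 : (ν.prod radPi) G ≤ a
  have step1 : (ν.prod (radPi n)) G ≤ ENNReal.ofReal a := by
    rw [Measure.prod_apply hGm]
    have hb : ∀ v : Fin n → ℝ, radPi n (Prod.mk v ⁻¹' G) ≤ ENNReal.ofReal a := by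
      intro v
      have : Prod.mk v ⁻¹' G = {w : Fin n → ℝ | (∑ i, w i * (v i - μ)) / n > Q v} := rfl
      rw [this]
      exact Fv_bootQuantile_le (fun i => v i - μ) ha1
    calc ∫⁻ v, radPi n (Prod.mk v ⁻¹' G) ∂ν ≤ ∫⁻ _, ENNReal.ofReal a ∂ν :=
          lintegral_mono fun v => hb v
      _ = ENNReal.ofReal a := by rw [lintegral_const, measure_univ, mul_one]
  -- Step 2 : (ν.prod radPi) G = ν A₀
  have step2 : (ν.prod (radPi n)) G
      = ν {v : Fin n → ℝ | (∑ i, (v i - μ)) / n > Q v} := by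
    have hswap : (ν.prod (radPi n)) G = ((radPi n).prod ν) (Prod.swap ⁻¹' G) := by
      rw [← Measure.prod_swap, Measure.map_apply measurable_swap hGm]
    have hGm' : MeasurableSet (Prod.swap ⁻¹' G) := measurable_swap hGm
    rw [hswap, Measure.prod_apply hGm']
    have hA0m : MeasurableSet {v : Fin n → ℝ | (∑ i, (v i - μ)) / n > Q v} := by
      refine measurableSet_lt hQm (Measurable.div_const ?_ _)
      exact Finset.measurable_sum _ fun i _ => by fun_prop
    have hae : ∀ s ∈ sgns n, ν (Prod.mk s ⁻¹' (Prod.swap ⁻¹' G))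
        = ν {v : Fin n → ℝ | (∑ i, (v i - μ)) / n > Q v} := by
      intro s hs
      have hTm : Measurable fun (v : Fin n → ℝ) i => μ + s i * (v i - μ) :=
        measurable_pi_lambda _ fun i => by fun_prop
      have hslice : Prod.mk s ⁻¹' (Prod.swap ⁻¹' G)
          = {v : Fin n → ℝ | (∑ i, s i * (v i - μ)) / n > Q v} := rfl
      rw [hslice]
      have hsliceM : MeasurableSet {v : Fin n → ℝ | (∑ i, s i * (v i - μ)) / n > Q v} := by
        refine measurableSet_lt hQm (Measurable.div_const ?_ _)
        exact Finset.measurable_sum _ fun i _ => by fun_prop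
      rw [hν]
      conv_lhs => rw [← nu_map_T hymeas hysym hs]
      rw [Measure.map_apply hTm hsliceM]
      congr 1
      ext v
      simp only [Set.mem_preimage, Set.mem_setOf_eq]
      have h1 : ∀ i, s i * (μ + s i * (v i - μ) - μ) = v i - μ := by
        intro i
        rcases hs i with h | h <;> rw [h] <;> ring
      have h2 : Q (fun i => μ + s i * (v i - μ)) = Q v := by
        rw [hQ]
        have h3 : (fun i => (μ + s i * (v i - μ)) - μ) = fun i => s i * (v i - μ) := by
          funext i; ring
        simp only [h3]
        exact bootQuantile_flip hs (fun i => v i - μ) a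
      rw [h2]
      constructor <;> intro h
      · refine lt_of_lt_of_eq h ?_
        congr 1
        exact Finset.sum_congr rfl fun i _ => h1 i
      · refine lt_of_lt_of_eq h ?_
        congr 1
        exact (Finset.sum_congr rfl fun i _ => h1 i).symm
    have haemeas : ∀ᵐ s ∂radPi n, ν (Prod.mk s ⁻¹' (Prod.swap ⁻¹' G))
        = ν {v : Fin n → ℝ | (∑ i, (v i - μ)) / n > Q v} := radPi_ae hae
    rw [lintegral_congr_ae haemeas, lintegral_const, measure_univ, mul_one]
  rw [← step2]
  exact step1

end Claims2

lemma pointwise_key {n : ℕ} {α δ : ℝ} (hα0 : 0 < α) (hα1 : α < 1) (hδ0 : 0 < δ) (hδ1 : δ < 1)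
    {u : Fin n → ℝ} {μ c B : ℝ} (hc0 : 0 ≤ c)
    (hrad : radPi n {w : Fin n → ℝ | c ≤ |∑ i, w i| / n} ≤ ENNReal.ofReal (α * δ))
    (hφω : |(∑ i, u i) / n - μ| < B)
    (hE : bootQuantile n (fun i => u i - (∑ j, u j) / n) (α * (1 - δ)) + c * B
        < (∑ i, u i) / n - μ) :
    bootQuantile n (fun i => u i - μ) α < (∑ i, u i) / n - μ := by
  set ybar : ℝ := (∑ i, u i) / n with hybar
  set q' : ℝ := bootQuantile n (fun i => u i - ybar) (α * (1 - δ)) with hq'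
  set t : ℝ := q' + c * |ybar - μ| with ht
  have haδ1 : α * (1 - δ) < 1 := by nlinarith
  have hsub : {w : Fin n → ℝ | (∑ i, w i * (u i - μ)) / n > t}
      ⊆ {w : Fin n → ℝ | (∑ i, w i * (u i - ybar)) / n > q'}
        ∪ {w : Fin n → ℝ | c ≤ |∑ i, w i| / n} := by
    intro w hw
    simp only [Set.mem_setOf_eq] at hw
    by_cases hcW : c ≤ |∑ i, w i| / n
    · exact Or.inr hcW
    push_neg at hcW
    left
    simp only [Set.mem_setOf_eq]
    have halg : ∑ i, w i * (u i - ybar) = (∑ i, w i * (u i - μ)) - (ybar - μ) * ∑ i, w i := by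
      rw [Finset.mul_sum, ← Finset.sum_sub_distrib]
      exact Finset.sum_congr rfl fun i _ => by ring
    have hdiv : (∑ i, w i * (u i - ybar)) / n
        = (∑ i, w i * (u i - μ)) / n - (ybar - μ) * ((∑ i, w i) / n) := by
      rw [halg, sub_div, mul_div_assoc]
    have hbound : (ybar - μ) * ((∑ i, w i) / n) ≤ |ybar - μ| * c := by
      calc (ybar - μ) * ((∑ i, w i) / n) ≤ |(ybar - μ) * ((∑ i, w i) / n)| := le_abs_self _
        _ = |ybar - μ| * (|∑ i, w i| / n) := by
            rw [abs_mul, abs_div, Nat.abs_cast]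
        _ ≤ |ybar - μ| * c := mul_le_mul_of_nonneg_left hcW.le (abs_nonneg _)
    have hcomm : c * |ybar - μ| = |ybar - μ| * c := mul_comm _ _
    rw [hdiv]
    simp only [gt_iff_lt] at hw ⊢
    linarith [hw, hbound]
  have hFt : Fv n (fun i => u i - μ) t ≤ ENNReal.ofReal α := by
    calc Fv n (fun i => u i - μ) t
        ≤ radPi n ({w : Fin n → ℝ | (∑ i, w i * (u i - ybar)) / n > q'}
            ∪ {w : Fin n → ℝ | c ≤ |∑ i, w i| / n}) := measure_mono hsub
      _ ≤ radPi n {w : Fin n → ℝ | (∑ i, w i * (u i - ybar)) / n > q'}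
            + radPi n {w : Fin n → ℝ | c ≤ |∑ i, w i| / n} := measure_union_le _ _
      _ ≤ ENNReal.ofReal (α * (1 - δ)) + ENNReal.ofReal (α * δ) :=
            add_le_add (Fv_bootQuantile_le (fun i => u i - ybar) haδ1) hrad
      _ = ENNReal.ofReal α := by
            rw [← ENNReal.ofReal_add (by nlinarith) (by nlinarith)]
            congr 1
            ring
  have h1 : bootQuantile n (fun i => u i - μ) α ≤ t := bootQuantile_le hα1 hFt
  have h2 : c * |ybar - μ| ≤ c * B := mul_le_mul_of_nonneg_left hφω.le hc0
  have h3 : q' + c * B < ybar - μ := hE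
  calc bootQuantile n (fun i => u i - μ) α ≤ t := h1
    _ = q' + c * |ybar - μ| := ht
    _ ≤ q' + c * B := by linarith
    _ < ybar - μ := h3

lemma hrad_num {n : ℕ} (hn : 1 ≤ n) {α δ : ℝ} (hα0 : 0 < α) (hα1 : α < 1)
    (hδ0 : 0 < δ) (hδ1 : δ < 1) :
    radPi n {w : Fin n → ℝ | Real.sqrt (2 * Real.log (2 / (α * δ)) / n) ≤ |∑ i, w i| / n}
      ≤ ENNReal.ofReal (α * δ) := by
  set c : ℝ := Real.sqrt (2 * Real.log (2 / (α * δ)) / n) with hc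
  have hnpos : (0 : ℝ) < n := by exact_mod_cast hn
  have hαδ0 : 0 < α * δ := mul_pos hα0 hδ0
  have hαδ1 : α * δ < 1 := by nlinarith
  have hL : 1 < 2 / (α * δ) := by rw [lt_div_iff₀ hαδ0]; linarith
  have hlog0 : 0 ≤ Real.log (2 / (α * δ)) := Real.log_nonneg hL.le
  have hc0 : 0 ≤ c := Real.sqrt_nonneg _
  have hc2 : c ^ 2 = 2 * Real.log (2 / (α * δ)) / n := Real.sq_sqrt (by positivity)
  have hset : {w : Fin n → ℝ | c ≤ |∑ i, w i| / n}
      = {w : Fin n → ℝ | (n : ℝ) * c ≤ |∑ i, w i|} := by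
    ext w
    simp only [Set.mem_setOf_eq]
    rw [le_div_iff₀ hnpos, mul_comm]
  rw [hset]
  refine (rad_hoeffding n hc0).trans (le_of_eq ?_)
  congr 1
  have h1 : (n : ℝ) * c ^ 2 = 2 * Real.log (2 / (α * δ)) := by
    rw [hc2]
    field_simp
  rw [h1]
  have h2 : -(2 * Real.log (2 / (α * δ))) / 2 = -Real.log (2 / (α * δ)) := by ring
  rw [h2, Real.exp_neg, Real.exp_log (by positivity)]
  rw [show (2 / (α * δ))⁻¹ = α * δ / 2 by rw [inv_div]]
  ring

/-- Non-asymptotic validity of the second-order-corrected bootstrapped threshold. -/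
theorem bootstrapped_threshold_valid
    {Ω : Type*} [MeasurableSpace Ω] (P : Measure Ω) [IsProbabilityMeasure P]
    (n : ℕ) (hn : 1 ≤ n) (μ α δ : ℝ)
    (hα0 : 0 < α) (hα1 : α < 1) (hδ0 : 0 < δ) (hδ1 : δ < 1)
    (y w : Fin n → Ω → ℝ)
    (hymeas : ∀ i, Measurable (y i))
    (hyindep : iIndepFun y P)
    (hyident : ∀ i j, Measure.map (y i) P = Measure.map (y j) P)
    (hyint : ∀ i, Integrable (y i) P)
    (hymean : ∀ i, ∫ ω, y i ω ∂P = μ)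
    (hysym : ∀ i, Measure.map (fun ω => y i ω - μ) P = Measure.map (fun ω => μ - y i ω) P)
    (hwmeas : ∀ i, Measurable (w i))
    (hwindep : iIndepFun w P)
    (hwdist : ∀ i, Measure.map (w i) P = radMeasure)
    (hyw : IndepFun (fun ω i => y i ω) (fun ω i => w i ω) P)
    (φ : (Fin n → ℝ) → ℝ) (hφmeas : Measurable φ) (hφnonneg : ∀ v, 0 ≤ φ v)
    (hφ : P {ω | φ (fun i => y i ω) ≤ |(∑ i, y i ω) / n - μ|} ≤ ENNReal.ofReal α) :
    P {ω | bootQuantile n (fun i => y i ω - (∑ j, y j ω) / n) (α * (1 - δ)) +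
          Real.sqrt (2 * Real.log (2 / (α * δ)) / n) * φ (fun i => y i ω) <
        (∑ i, y i ω) / n - μ} ≤ ENNReal.ofReal (2 * α) := by
  have hnpos : (0 : ℝ) < n := by exact_mod_cast hn
  set A : Set Ω := {ω | φ (fun i => y i ω) ≤ |(∑ i, y i ω) / n - μ|} with hA
  set A₀ : Set (Fin n → ℝ) :=
    {v : Fin n → ℝ | (∑ i, (v i - μ)) / n > bootQuantile n (fun i => v i - μ) α} with hA₀
  have hA₀m : MeasurableSet A₀ := by
    refine measurableSet_lt (measurable_Q hα1 μ) (Measurable.div_const ?_ _)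
    exact Finset.measurable_sum _ fun i _ => by fun_prop
  set B : Set Ω := (fun ω (i : Fin n) => y i ω) ⁻¹' A₀ with hB
  have hkey : ∀ u : Fin n → ℝ, (∑ i, (u i - μ)) / (n : ℝ) = (∑ i, u i) / n - μ := by
    intro u
    have h1 : ∑ i, (u i - μ) = (∑ i, u i) - n * μ := by
      rw [Finset.sum_sub_distrib, Finset.sum_const, Finset.card_univ, Fintype.card_fin,
        nsmul_eq_mul]
    rw [h1, sub_div]
    congr 1
    field_simp
  have hsub : {ω | bootQuantile n (fun i => y i ω - (∑ j, y j ω) / n) (α * (1 - δ)) +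
          Real.sqrt (2 * Real.log (2 / (α * δ)) / n) * φ (fun i => y i ω) <
        (∑ i, y i ω) / n - μ} ⊆ A ∪ B := by
    intro ω hω
    by_cases hAm : ω ∈ A
    · exact Or.inl hAm
    right
    rw [hA, Set.mem_setOf_eq, not_le] at hAm
    have hpk := pointwise_key (n := n) hα0 hα1 hδ0 hδ1 (u := fun i => y i ω)
      (μ := μ) (B := φ (fun i => y i ω)) (Real.sqrt_nonneg _)
      (hrad_num hn hα0 hα1 hδ0 hδ1) hAm hω
    rw [hB, Set.mem_preimage, hA₀, Set.mem_setOf_eq]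
    rw [hkey (fun i => y i ω)]
    exact hpk
  have hBle : P B ≤ ENNReal.ofReal α := by
    have hvec : Measurable fun ω (i : Fin n) => y i ω :=
      measurable_pi_lambda _ fun i => hymeas i
    have hPB : P B = (Measure.map (fun ω (i : Fin n) => y i ω) P) A₀ :=
      (Measure.map_apply hvec hA₀m).symm
    rw [hPB, iIndepFun_map_pi hymeas hyindep]
    exact sym_bound hymeas hysym hα0.le hα1
  calc P _ ≤ P (A ∪ B) := measure_mono hsub
    _ ≤ P A + P B := measure_union_le _ _
    _ ≤ ENNReal.ofReal α + ENNReal.ofReal α := add_le_add hφ hBle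
    _ = ENNReal.ofReal (2 * α) := by
        rw [← ENNReal.ofReal_add hα0.le hα0.le]
        congr 1
        ring
end

section
/- Let K ≥ 2 be an integer, T > 1 a real number, c, σ > 0, β > 0, and μ* > 0. Suppose Δ_2, …, Δ_K are reals with 0 < Δ_k ≤ μ* and n_2, …, n_K are nonnegative reals with Σ_{k=2}^K n_k ≤ T, such that for every k, Δ_k n_k ≤ 128 c^2 σ^2 (log T)/Δ_k + 8 c σ (2 log T)^{1/β} + 4 Δ_k. If moreover T ≥ 2^{2/β − 3} · K · (log T)^{2/β − 1}, then Σ_{k=2}^K Δ_k n_k ≤ 32√2 · c σ · sqrt(T K log T) + 4 K μ*. -/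
open Real

/-- Deterministic aggregation step: the problem-dependent per-arm bounds imply the
problem-independent regret bound. -/
theorem problem_independent_regret_aggregation
    (K : ℕ) (hK : 2 ≤ K) (T c σ β μstar : ℝ)
    (hT : 1 < T) (hc : 0 < c) (hσ : 0 < σ) (hβ : 0 < β) (hμ : 0 < μstar)
    (Δ N : ℕ → ℝ)
    (hΔpos : ∀ k ∈ Finset.Icc 2 K, 0 < Δ k)
    (hΔle : ∀ k ∈ Finset.Icc 2 K, Δ k ≤ μstar)
    (hNpos : ∀ k ∈ Finset.Icc 2 K, 0 ≤ N k)
    (hNsum : ∑ k ∈ Finset.Icc 2 K, N k ≤ T)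
    (hbound : ∀ k ∈ Finset.Icc 2 K,
      Δ k * N k ≤ 128 * c ^ 2 * σ ^ 2 * Real.log T / Δ k +
        8 * c * σ * (2 * Real.log T) ^ (1 / β) + 4 * Δ k)
    (hT2 : (2 : ℝ) ^ (2 / β - 3) * K * Real.log T ^ (2 / β - 1) ≤ T) :
    ∑ k ∈ Finset.Icc 2 K, Δ k * N k ≤
      32 * Real.sqrt 2 * c * σ * Real.sqrt (T * K * Real.log T) + 4 * K * μstar := by
  have hL : 0 < Real.log T := Real.log_pos hT
  set L := Real.log T with hLdef
  have hT0 : 0 < T := lt_trans one_pos hT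
  have hK0 : (0:ℝ) < K := by positivity
  set A : ℝ := 128 * c ^ 2 * σ ^ 2 * L with hAdef
  have hA : 0 < A := by rw [hAdef]; positivity
  set B : ℝ := 8 * c * σ * (2 * L) ^ (1 / β) with hBdef
  have h2L : (0:ℝ) < 2 * L := by linarith
  have hB : 0 < B := by rw [hBdef]; positivity
  set D : ℝ := Real.sqrt ((K : ℝ) * A / T) with hDdef
  have hD : 0 < D := Real.sqrt_pos.2 (by positivity)
  -- per-arm bound
  have key : ∀ k ∈ Finset.Icc 2 K, Δ k * N k ≤ D * N k + (A / D + B + 4 * μstar) := by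
    intro k hk
    rcases le_or_gt (Δ k) D with h | h
    · have h1 : Δ k * N k ≤ D * N k := mul_le_mul_of_nonneg_right h (hNpos k hk)
      have h2 : 0 ≤ A / D + B + 4 * μstar := by positivity
      linarith
    · have h1 := hbound k hk
      have hΔ := hΔpos k hk
      have h2 : A / Δ k ≤ A / D := by
        apply div_le_div_of_nonneg_left hA.le hD h.le
      have h3 : Δ k ≤ μstar := hΔle k hk
      have h4 : 0 ≤ D * N k := mul_nonneg hD.le (hNpos k hk)
      linarith
  -- sum
  have hcard : ((Finset.Icc 2 K).card : ℝ) ≤ K := by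
    have : (Finset.Icc 2 K).card ≤ K := by rw [Nat.card_Icc]; omega
    exact_mod_cast this
  have hsum : ∑ k ∈ Finset.Icc 2 K, Δ k * N k ≤
      D * T + (K : ℝ) * (A / D + B + 4 * μstar) := by
    calc ∑ k ∈ Finset.Icc 2 K, Δ k * N k
        ≤ ∑ k ∈ Finset.Icc 2 K, (D * N k + (A / D + B + 4 * μstar)) :=
          Finset.sum_le_sum key
      _ = D * (∑ k ∈ Finset.Icc 2 K, N k)
          + ((Finset.Icc 2 K).card : ℝ) * (A / D + B + 4 * μstar) := by
          rw [Finset.sum_add_distrib, ← Finset.mul_sum, Finset.sum_const, nsmul_eq_mul]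
      _ ≤ D * T + (K : ℝ) * (A / D + B + 4 * μstar) := by
          have h1 : D * (∑ k ∈ Finset.Icc 2 K, N k) ≤ D * T :=
            mul_le_mul_of_nonneg_left hNsum hD.le
          have h2 : 0 ≤ A / D + B + 4 * μstar := by positivity
          nlinarith [mul_le_mul_of_nonneg_right hcard h2]
  -- identify the sqrt terms
  have hDT : D * T = Real.sqrt ((K : ℝ) * A * T) := by
    rw [hDdef]
    rw [show T = Real.sqrt (T * T) from (Real.sqrt_mul_self hT0.le).symm]
    rw [← Real.sqrt_mul (by positivity)]
    rw [Real.sqrt_mul_self hT0.le]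
    congr 1
    field_simp
  have hKAD : (K : ℝ) * A / D = Real.sqrt ((K : ℝ) * A * T) := by
    rw [hDdef, Real.sqrt_div (by positivity : (0:ℝ) ≤ (K:ℝ) * A),
      div_div_eq_mul_div, mul_div_right_comm, Real.div_sqrt,
      ← Real.sqrt_mul (by positivity)]
  have hsq2 : Real.sqrt 2 ^ 2 = 2 := Real.sq_sqrt (by norm_num)
  have hS : Real.sqrt ((K : ℝ) * A * T) = 8 * Real.sqrt 2 * c * σ * Real.sqrt (T * K * L) := by
    rw [show (K : ℝ) * A * T = (8 * Real.sqrt 2 * c * σ) ^ 2 * (T * K * L) by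
      rw [hAdef]; linear_combination (-64*c^2*σ^2*T*(K:ℝ)*L) * hsq2]
    rw [Real.sqrt_mul (by positivity), Real.sqrt_sq (by positivity)]
  -- bound K*B
  have hKB : (K : ℝ) * B ≤ 16 * Real.sqrt 2 * c * σ * Real.sqrt (T * K * L) := by
    have e2pow : (2:ℝ) ^ (2 / β) = 2 ^ (2 / β - 3) * 8 := by
      rw [show 2 / β = (2 / β - 3) + 3 by ring, Real.rpow_add two_pos]
      congr 1
      · ring
      · rw [show (3:ℝ) = ((3:ℕ):ℝ) by norm_num, Real.rpow_natCast]
        norm_num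
    have eL : L ^ (2 / β) = L ^ (2 / β - 1) * L := by
      rw [← Real.rpow_add_one hL.ne' (2 / β - 1)]
      congr 1
      ring
    have e3 : ((2 * L) ^ ((1:ℝ) / β)) ^ 2 = 2 ^ (2 / β) * L ^ (2 / β) := by
      rw [← Real.rpow_natCast ((2 * L) ^ ((1:ℝ) / β)) 2, ← Real.rpow_mul h2L.le,
        show (1 / β) * ((2:ℕ):ℝ) = 2 / β by push_cast; ring,
        Real.mul_rpow (by norm_num) hL.le]
    have step : (2:ℝ) ^ (2 / β) * (K : ℝ) ^ 2 * L ^ (2 / β) ≤ 8 * (T * K * L) := by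
      have hmul := mul_le_mul_of_nonneg_right hT2
        (show (0:ℝ) ≤ 8 * K * L by positivity)
      calc (2:ℝ) ^ (2 / β) * (K : ℝ) ^ 2 * L ^ (2 / β)
          = (2 ^ (2 / β - 3) * K * L ^ (2 / β - 1)) * (8 * K * L) := by
            rw [e2pow, eL]; ring
        _ ≤ T * (8 * K * L) := hmul
        _ = 8 * (T * K * L) := by ring
    have keyB : (K : ℝ) * (2 * L) ^ ((1:ℝ) / β) ≤ 2 * Real.sqrt 2 * Real.sqrt (T * K * L) := by
      have h1 : 0 ≤ (K : ℝ) * (2 * L) ^ ((1:ℝ) / β) := by positivity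
      have hr : 0 ≤ 2 * Real.sqrt 2 * Real.sqrt (T * K * L) := by positivity
      have hsqle : ((K : ℝ) * (2 * L) ^ ((1:ℝ) / β)) ^ 2
          ≤ (2 * Real.sqrt 2 * Real.sqrt (T * K * L)) ^ 2 := by
        have eR : (2 * Real.sqrt 2 * Real.sqrt (T * K * L)) ^ 2 = 8 * (T * K * L) := by
          rw [mul_pow, mul_pow, hsq2, Real.sq_sqrt (by positivity)]
          ring
        rw [eR, mul_pow, e3]
        calc (K : ℝ) ^ 2 * (2 ^ (2 / β) * L ^ (2 / β))
            = 2 ^ (2 / β) * (K : ℝ) ^ 2 * L ^ (2 / β) := by ring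
          _ ≤ 8 * (T * K * L) := step
      have := Real.sqrt_le_sqrt hsqle
      rwa [Real.sqrt_sq h1, Real.sqrt_sq hr] at this
    calc (K : ℝ) * B = 8 * c * σ * ((K : ℝ) * (2 * L) ^ ((1:ℝ) / β)) := by
          rw [hBdef]; ring
      _ ≤ 8 * c * σ * (2 * Real.sqrt 2 * Real.sqrt (T * K * L)) :=
          mul_le_mul_of_nonneg_left keyB (by positivity)
      _ = 16 * Real.sqrt 2 * c * σ * Real.sqrt (T * K * L) := by ring
  -- combine
  have hfinal : D * T + (K : ℝ) * (A / D + B + 4 * μstar) ≤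
      32 * Real.sqrt 2 * c * σ * Real.sqrt (T * K * L) + 4 * K * μstar := by
    have e : (K : ℝ) * (A / D + B + 4 * μstar)
        = (K : ℝ) * A / D + (K : ℝ) * B + 4 * K * μstar := by ring
    rw [e, hDT, hKAD, hS]
    linarith
  linarith
end

section
/- Let n ≥ 1 and let y_1, …, y_n be i.i.d. real random variables with mean μ, each symmetric about μ. Let w^{(1)}, …, w^{(B)} be B i.i.d. random vectors, each uniformly distributed on {−1, +1}^n (i.e., with i.i.d. Rademacher coordinates), independent of (y_1,…,y_n). Then for every α ∈ (0,1), P( ȳ_n − μ > q̃_α(y − μ, w^B) ) ≤ (⌊Bα⌋ + 1)/(B + 1). -/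
open MeasureTheory ProbabilityTheory Real

/-- The Monte Carlo bootstrap quantile
`q̃_α(v, w^B) = inf {x : B⁻¹ #{b : n⁻¹ ∑ i, w^{(b)} i * v i ≥ x} ≤ α}`. -/
noncomputable def mcQuantile (n B : ℕ) (v : Fin n → ℝ) (W : Fin B → Fin n → ℝ)
    (α : ℝ) : ℝ :=
  sInf {x : ℝ |
    ((Finset.univ.filter fun b : Fin B => x ≤ (∑ i, W b i * v i) / n).card : ℝ) / B ≤ α}

namespace MCQAux

/-- sign of a boolean -/
def sgnB : Bool → ℝ := fun b => if b then -1 else 1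

lemma sgnB_mul_self (b : Bool) : sgnB b * sgnB b = 1 := by cases b <;> simp [sgnB]

lemma sgnB_cases (b : Bool) : sgnB b = 1 ∨ sgnB b = -1 := by cases b <;> simp [sgnB]

lemma sgnB_xor (a b : Bool) : sgnB (xor a b) = sgnB a * sgnB b := by
  cases a <;> cases b <;> norm_num [sgnB]

instance radMeasure_prob : IsProbabilityMeasure radMeasure := by
  constructor
  simp only [radMeasure, Measure.add_apply, Measure.smul_apply, smul_eq_mul,
    Measure.dirac_apply' _ MeasurableSet.univ, Set.indicator_univ, Pi.one_apply, mul_one]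
  rw [← two_mul, ENNReal.mul_inv_cancel two_ne_zero ENNReal.ofNat_ne_top]

lemma radMeasure_eq_sum : radMeasure = ∑ a : Bool, (2⁻¹ : ENNReal) • Measure.dirac (sgnB a) := by
  rw [Fintype.sum_bool]
  simp [radMeasure, sgnB, add_comm]

/-- A product of finitely-atomic probability measures is the corresponding atomic measure. -/
lemma pi_atomic {ι : Type*} [Fintype ι] [DecidableEq ι] {E : Type*} [MeasurableSpace E]
    {J : Type*} [Fintype J] (point : J → E) (c : J → ENNReal)
    (κ : Measure E) [IsProbabilityMeasure κ]
    (hκ : κ = ∑ a : J, c a • Measure.dirac (point a)) :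
    Measure.pi (fun _ : ι => κ)
      = ∑ g : ι → J, (∏ i, c (g i)) • Measure.dirac (fun i => point (g i)) := by
  apply Measure.pi_eq
  intro s hs
  classical
  rw [Measure.finset_sum_apply]
  have hps : MeasurableSet (Set.univ.pi s) := MeasurableSet.univ_pi hs
  calc
    ∑ g : ι → J, ((∏ i, c (g i)) • Measure.dirac fun i => point (g i)) (Set.univ.pi s)
        = ∑ g : ι → J, ∏ i, (c (g i) * if point (g i) ∈ s i then 1 else 0) := by
          refine Finset.sum_congr rfl fun g _ => ?_
          rw [Measure.smul_apply, smul_eq_mul, Measure.dirac_apply' _ hps,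
            Finset.prod_mul_distrib, Finset.prod_boole]
          simp [Set.indicator_apply, Set.mem_univ_pi]
    _ = ∏ i : ι, ∑ a : J, (c a * if point a ∈ s i then 1 else 0) := by
          rw [Finset.prod_univ_sum (fun _ => (Finset.univ : Finset J))
            (fun i a => c a * if point a ∈ s i then 1 else 0), Fintype.piFinset_univ]
    _ = ∏ i : ι, κ (s i) := by
          refine Finset.prod_congr rfl fun i _ => ?_
          rw [hκ, Measure.finset_sum_apply]
          refine (Finset.sum_congr rfl fun a _ => ?_).symm
          rw [Measure.smul_apply, smul_eq_mul, Measure.dirac_apply' _ (hs i)]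
          simp [Set.indicator_apply]

/-- Sign flips preserve a product of symmetric measures. -/
lemma flip_inv {ι : Type*} [Fintype ι] (ν : Measure ℝ) [IsProbabilityMeasure ν]
    (hsym : ν.map Neg.neg = ν) (σ : ι → ℝ) (hσ : ∀ i, σ i = 1 ∨ σ i = -1) :
    Measure.map (fun z : ι → ℝ => fun i => σ i * z i) (Measure.pi fun _ => ν)
      = Measure.pi (fun _ => ν) := by
  have hg : Measurable (fun z : ι → ℝ => fun i => σ i * z i) :=
    measurable_pi_lambda _ fun i => by fun_prop
  refine ((Measure.pi_eq fun s hs => ?_)).symm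
  rw [Measure.map_apply hg (MeasurableSet.univ_pi hs)]
  have hpre : (fun z : ι → ℝ => fun i => σ i * z i) ⁻¹' Set.univ.pi s
      = Set.univ.pi (fun i => (σ i * ·) ⁻¹' s i) := by
    ext z; simp [Set.mem_univ_pi]
  rw [hpre, Measure.pi_pi]
  refine Finset.prod_congr rfl fun i _ => ?_
  rcases hσ i with h | h
  · simp [h]
  · have : ((σ i * ·) ⁻¹' s i) = Neg.neg ⁻¹' s i := by
      ext x; simp [h]
    rw [this, ← Measure.map_apply measurable_neg (hs i), hsym]

/-- Independent families map to product measures. -/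
lemma map_fun_eq_pi {ι : Type*} [Fintype ι] {Ω : Type*} [MeasurableSpace Ω]
    (P : Measure Ω) [IsProbabilityMeasure P] {E : ι → Type*} [∀ i, MeasurableSpace (E i)]
    (X : ∀ i, Ω → E i) (hX : ∀ i, Measurable (X i))
    (hindep : iIndepFun X P) :
    Measure.map (fun ω i => X i ω) P = Measure.pi (fun i => Measure.map (X i) P) := by
  haveI : ∀ i, IsProbabilityMeasure (Measure.map (X i) P) :=
    fun i => Measure.isProbabilityMeasure_map (hX i).aemeasurable
  refine ((Measure.pi_eq fun s hs => ?_)).symm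
  rw [Measure.map_apply (measurable_pi_lambda _ hX) (MeasurableSet.univ_pi hs)]
  have hpre : (fun ω i => X i ω) ⁻¹' Set.univ.pi s = ⋂ i, X i ⁻¹' s i := by
    ext ω; simp [Set.mem_univ_pi]
  have := (iIndepFun_iff_measure_inter_preimage_eq_mul.mp hindep) Finset.univ
    (sets := s) (fun i _ => hs i)
  simp only [Finset.mem_univ, Set.iInter_true, Finset.prod_attach] at this
  rw [hpre, this]
  exact Finset.prod_congr rfl fun i _ =>
    (Measure.map_apply (hX i) (hs i)).symm

/-- The statistic map: coordinate `0` is the plain sum, coordinate `b+1` the `b`-th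
randomized sum. -/
noncomputable def Fmap (n B : ℕ) : (Fin n → ℝ) × (Fin B → Fin n → ℝ) → Fin (B + 1) → ℝ :=
  fun p => Fin.cons (∑ i, p.1 i) (fun b => ∑ i, p.2 b i * p.1 i)

lemma Fmap_measurable (n B : ℕ) : Measurable (Fmap n B) := by
  refine measurable_pi_lambda _ fun j => ?_
  refine Fin.cases ?_ (fun b => ?_) j
  · simp only [Fmap, Fin.cons_zero]
    exact Finset.measurable_sum _ fun i _ => (measurable_pi_apply i).comp measurable_fst
  · simp only [Fmap, Fin.cons_succ]
    refine Finset.measurable_sum _ fun i _ => Measurable.mul ?_ ?_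
    · exact (measurable_pi_apply i).comp ((measurable_pi_apply b).comp measurable_snd)
    · exact (measurable_pi_apply i).comp measurable_fst

/-- sign matrix attached to a boolean matrix -/
def Wmat (n B : ℕ) (ε : Fin B → Fin n → Bool) : Fin B → Fin n → ℝ := fun b i => sgnB (ε b i)

/-- the involution on sign matrices implementing the swap of coordinates `0` and `b+1` -/
def flipIdx (n B : ℕ) (b : Fin B) (ε : Fin B → Fin n → Bool) : Fin B → Fin n → Bool :=
  fun c i => if c = b then ε b i else xor (ε c i) (ε b i)

lemma flipIdx_invol (n B : ℕ) (b : Fin B) :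
    Function.Involutive (flipIdx n B b) := by
  intro ε
  funext c i
  by_cases hc : c = b <;> simp [flipIdx, hc, Bool.xor_assoc]

lemma Fmap_swap (n B : ℕ) (b : Fin B) (z : Fin n → ℝ) (ε : Fin B → Fin n → Bool) :
    Fmap n B (fun i => sgnB (ε b i) * z i, Wmat n B (flipIdx n B b ε))
      = Fmap n B (z, Wmat n B ε) ∘ (Equiv.swap 0 b.succ) := by
  funext j
  refine Fin.cases ?_ (fun c => ?_) j
  · simp [Function.comp_apply, Equiv.swap_apply_left, Fmap, Fin.cons_zero, Fin.cons_succ, Wmat]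
  · simp only [Function.comp_apply, Fmap, Fin.cons_succ]
    by_cases hc : c = b
    · subst hc
      rw [Equiv.swap_apply_right]
      simp only [Fin.cons_zero, Wmat, flipIdx, if_pos rfl, if_true]
      refine Finset.sum_congr rfl fun i _ => ?_
      rw [← mul_assoc, sgnB_mul_self, one_mul]
    · have hne : (c.succ : Fin (B+1)) ≠ 0 := Fin.succ_ne_zero c
      have hne2 : (c.succ : Fin (B+1)) ≠ b.succ := fun h => hc (Fin.succ_injective _ h)
      rw [Equiv.swap_apply_of_ne_of_ne hne hne2]
      simp only [Fin.cons_succ, Wmat, flipIdx, if_neg hc]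
      refine Finset.sum_congr rfl fun i _ => ?_
      rw [sgnB_xor, mul_assoc, ← mul_assoc (sgnB (ε b i)), sgnB_mul_self, one_mul]

/-- the number of strictly-other coordinates at least as large as coordinate `j` -/
noncomputable def Ncnt (B : ℕ) (j : Fin (B + 1)) (t : Fin (B + 1) → ℝ) : ℕ :=
  (Finset.univ.filter fun c => c ≠ j ∧ t j ≤ t c).card

lemma Ncnt_measurable (B : ℕ) (j : Fin (B + 1)) : Measurable (Ncnt B j) := by
  have : Ncnt B j = fun t => ∑ c : Fin (B+1), if c ≠ j ∧ t j ≤ t c then 1 else 0 := by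
    funext t; exact Finset.card_filter _ _
  rw [this]
  refine Finset.measurable_sum _ fun c _ => ?_
  refine Measurable.ite ?_ measurable_const measurable_const
  by_cases hc : c = j
  · simp [hc]
  · have : {t : Fin (B+1) → ℝ | c ≠ j ∧ t j ≤ t c} = {t | t j ≤ t c} := by
      ext t; simp [hc]
    rw [this]
    exact measurableSet_le (measurable_pi_apply j) (measurable_pi_apply c)

lemma Ncnt_comp_perm (B : ℕ) (j : Fin (B + 1)) (e : Equiv.Perm (Fin (B + 1)))
    (t : Fin (B + 1) → ℝ) : Ncnt B j (t ∘ e) = Ncnt B (e j) t := by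
  unfold Ncnt
  refine Finset.card_bij' (fun c _ => e c) (fun c _ => e.symm c) ?_ ?_ ?_ ?_
  · intro c hc
    simp only [Finset.mem_filter, Finset.mem_univ, true_and] at hc ⊢
    exact ⟨fun h => hc.1 (e.injective h), hc.2⟩
  · intro c hc
    simp only [Finset.mem_filter, Finset.mem_univ, true_and, Function.comp_apply] at hc ⊢
    constructor
    · intro h; exact hc.1 (by rw [← h, Equiv.apply_symm_apply])
    · simpa [Equiv.apply_symm_apply] using hc.2
  · intro c _; exact e.symm_apply_apply c
  · intro c _; exact e.apply_symm_apply c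

/-- at most `k+1` indices can have at most `k` other coordinates above them -/
lemma Ncnt_card_le (B k : ℕ) (t : Fin (B + 1) → ℝ) :
    (Finset.univ.filter fun j => Ncnt B j t ≤ k).card ≤ k + 1 := by
  set S := Finset.univ.filter fun j => Ncnt B j t ≤ k with hS
  rcases S.eq_empty_or_nonempty with h | h
  · simp [h]
  · obtain ⟨j0, hj0, hmin⟩ := S.exists_min_image t h
    have hsub : S.erase j0 ⊆ Finset.univ.filter fun c => c ≠ j0 ∧ t j0 ≤ t c := by
      intro c hc
      rw [Finset.mem_erase] at hc
      simp only [Finset.mem_filter, Finset.mem_univ, true_and]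
      exact ⟨hc.1, hmin c hc.2⟩
    have h1 : S.card - 1 ≤ Ncnt B j0 t := by
      have := Finset.card_le_card hsub
      rwa [Finset.card_erase_of_mem hj0] at this
    have h2 : Ncnt B j0 t ≤ k := by
      have := hj0; rw [hS, Finset.mem_filter] at this; exact this.2
    omega

lemma Ncnt_zero (B : ℕ) (t : Fin (B + 1) → ℝ) :
    Ncnt B 0 t = (Finset.univ.filter fun b : Fin B => t 0 ≤ t b.succ).card := by
  classical
  unfold Ncnt
  refine Finset.card_bij' (fun c hc => Fin.pred c ?_) (fun b _ => b.succ) ?_ ?_ ?_ ?_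
  · rw [Finset.mem_filter] at hc; exact hc.2.1
  · intro c hc
    rw [Finset.mem_filter] at hc ⊢
    refine ⟨Finset.mem_univ _, ?_⟩
    have h2 := hc.2.2
    rwa [Fin.succ_pred]
  · intro b hb
    rw [Finset.mem_filter] at hb ⊢
    exact ⟨Finset.mem_univ _, Fin.succ_ne_zero b, hb.2⟩
  · intro c hc; exact Fin.succ_pred c _
  · intro b hb; exact Fin.pred_succ b

lemma quantile_count_le {B n : ℕ} (hB : 0 < B) (α : ℝ) (hα0 : 0 < α) (hα1 : α < 1)
    (S : Fin B → ℝ) (t0 : ℝ)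
    (h : sInf {x : ℝ |
        ((Finset.univ.filter fun b : Fin B => x ≤ S b / n).card : ℝ) / B ≤ α} < t0) :
    ((Finset.univ.filter fun b : Fin B => t0 ≤ S b / n).card : ℝ) ≤ B * α := by
  classical
  have hBR : (0:ℝ) < B := by exact_mod_cast hB
  set g : Fin B → ℝ := fun b => S b / n with hg
  set A : Set ℝ := {x : ℝ |
    ((Finset.univ.filter fun b : Fin B => x ≤ g b).card : ℝ) / B ≤ α} with hA
  have hne : (Finset.univ : Finset (Fin B)).Nonempty := ⟨⟨0, hB⟩, Finset.mem_univ _⟩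
  have hAne : A.Nonempty := by
    refine ⟨(Finset.univ.sup' hne g) + 1, ?_⟩
    have he : (Finset.univ.filter fun b => Finset.univ.sup' hne g + 1 ≤ g b) = ∅ := by
      refine Finset.filter_false_of_mem fun b _ => ?_
      push_neg
      exact lt_of_le_of_lt (Finset.le_sup' g (Finset.mem_univ b)) (lt_add_one _)
    simp only [hA, Set.mem_setOf_eq, he, Finset.card_empty, Nat.cast_zero, zero_div]
    exact le_of_lt hα0
  have hAbdd : BddBelow A := by
    refine ⟨Finset.univ.inf' hne g, fun x hx => ?_⟩
    by_contra hlt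
    push_neg at hlt
    have hall : (Finset.univ.filter fun b => x ≤ g b) = Finset.univ := by
      refine Finset.filter_true_of_mem fun b _ => ?_
      exact le_of_lt (lt_of_lt_of_le hlt (Finset.inf'_le g (Finset.mem_univ b)))
    rw [hA, Set.mem_setOf_eq, hall, Finset.card_univ, Fintype.card_fin,
      div_self (ne_of_gt hBR)] at hx
    linarith
  obtain ⟨x, hxA, hxlt⟩ := (csInf_lt_iff hAbdd hAne).mp h
  have hsub : (Finset.univ.filter fun b => t0 ≤ g b)
      ⊆ Finset.univ.filter fun b => x ≤ g b := by
    intro b hb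
    rw [Finset.mem_filter] at hb ⊢
    exact ⟨hb.1, le_trans (le_of_lt hxlt) hb.2⟩
  have hcard : ((Finset.univ.filter fun b => t0 ≤ g b).card : ℝ)
      ≤ ((Finset.univ.filter fun b => x ≤ g b).card : ℝ) := by
    exact_mod_cast Finset.card_le_card hsub
  rw [hA, Set.mem_setOf_eq, div_le_iff₀ hBR] at hxA
  calc ((Finset.univ.filter fun b => t0 ≤ g b).card : ℝ)
      ≤ ((Finset.univ.filter fun b => x ≤ g b).card : ℝ) := hcard
    _ ≤ α * B := hxA
    _ = B * α := mul_comm _ _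

end MCQAux

open MCQAux

/-- Monte Carlo quantile approximation: validity of the Monte Carlo bootstrapped quantile
around the true mean for symmetric i.i.d. rewards. -/
theorem monte_carlo_quantile_valid
    {Ω : Type*} [MeasurableSpace Ω] (P : Measure Ω) [IsProbabilityMeasure P]
    (n B : ℕ) (hn : 1 ≤ n) (hB : 1 ≤ B) (μ : ℝ)
    (y : Fin n → Ω → ℝ)
    (hymeas : ∀ i, Measurable (y i))
    (hyindep : iIndepFun y P)
    (hyident : ∀ i j, Measure.map (y i) P = Measure.map (y j) P)
    (hyint : ∀ i, Integrable (y i) P)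
    (hymean : ∀ i, ∫ ω, y i ω ∂P = μ)
    (hysym : ∀ i, Measure.map (fun ω => y i ω - μ) P = Measure.map (fun ω => μ - y i ω) P)
    (w : Fin B → Ω → (Fin n → ℝ))
    (hwmeas : ∀ b, Measurable (w b))
    (hwindep : iIndepFun w P)
    (hwdist : ∀ b, Measure.map (w b) P = radPi n)
    (hyw : IndepFun (fun ω i => y i ω) (fun ω b => w b ω) P)
    (α : ℝ) (hα0 : 0 < α) (hα1 : α < 1) :
    P {ω | mcQuantile n B (fun i => y i ω - μ) (fun b => w b ω) α <
        (∑ i, y i ω) / n - μ} ≤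
      ENNReal.ofReal (((⌊(B : ℝ) * α⌋ : ℝ) + 1) / ((B : ℝ) + 1)) := by
  classical
  have hn0 : 0 < n := hn
  have hB0 : 0 < B := hB
  have hnR : (0:ℝ) < n := by exact_mod_cast hn0
  have hBR : (0:ℝ) < B := by exact_mod_cast hB0
  set i0 : Fin n := ⟨0, hn0⟩ with hi0
  have hsubm : Measurable (fun x : ℝ => x - μ) := measurable_sub_const μ
  have hzmeas : ∀ i, Measurable (fun ω => y i ω - μ) :=
    fun i => (hymeas i).sub measurable_const
  set ν : Measure ℝ := Measure.map (fun ω => y i0 ω - μ) P with hνdef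
  haveI hνprob : IsProbabilityMeasure ν :=
    Measure.isProbabilityMeasure_map (hzmeas i0).aemeasurable
  have hνi : ∀ i, Measure.map (fun ω => y i ω - μ) P = ν := by
    intro i
    calc Measure.map (fun ω => y i ω - μ) P
        = Measure.map (fun x => x - μ) (Measure.map (y i) P) :=
          (Measure.map_map hsubm (hymeas i)).symm
      _ = Measure.map (fun x => x - μ) (Measure.map (y i0) P) := by rw [hyident i i0]
      _ = ν := Measure.map_map hsubm (hymeas i0)
  have hνsym : ν.map Neg.neg = ν := by
    calc ν.map Neg.neg
        = Measure.map (Neg.neg ∘ fun ω => y i0 ω - μ) P :=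
          Measure.map_map measurable_neg (hzmeas i0)
      _ = Measure.map (fun ω => μ - y i0 ω) P := by
          congr 1; funext ω; simp [Function.comp, neg_sub]
      _ = ν := (hysym i0).symm
  haveI : IsProbabilityMeasure (radPi n) := by unfold radPi; infer_instance
  set mZ : Measure (Fin n → ℝ) := Measure.pi (fun _ : Fin n => ν) with hmZdef
  set mW : Measure (Fin B → Fin n → ℝ) := Measure.pi (fun _ : Fin B => radPi n) with hmWdef
  haveI : IsProbabilityMeasure mZ := by rw [hmZdef]; infer_instance
  haveI : IsProbabilityMeasure mW := by rw [hmWdef]; infer_instance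
  have hzvec : Measure.map (fun ω i => y i ω - μ) P = mZ := by
    have hzindep : iIndepFun (fun i ω => y i ω - μ) P := by
      have h := hyindep.comp (fun _ => fun x => x - μ) (fun _ => hsubm)
      exact h
    have h := map_fun_eq_pi P (fun i ω => y i ω - μ) hzmeas hzindep
    rw [h, hmZdef]
    exact congrArg Measure.pi (funext fun i => hνi i)
  have hwvec : Measure.map (fun ω b => w b ω) P = mW := by
    have h := map_fun_eq_pi P w hwmeas hwindep
    rw [h, hmWdef]
    exact congrArg Measure.pi (funext fun b => hwdist b)
  set Z : Ω → (Fin n → ℝ) × (Fin B → Fin n → ℝ) :=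
    fun ω => (fun i => y i ω - μ, fun b => w b ω) with hZdef
  have hZmeas : Measurable Z :=
    (measurable_pi_lambda _ hzmeas).prodMk (measurable_pi_lambda _ hwmeas)
  set m : Measure ((Fin n → ℝ) × (Fin B → Fin n → ℝ)) := mZ.prod mW with hmdef
  haveI : IsProbabilityMeasure m := by rw [hmdef]; infer_instance
  have hmeq : Measure.map Z P = m := by
    have hyw' : IndepFun (fun ω i => y i ω - μ) (fun ω b => w b ω) P := by
      have h := hyw.comp (φ := fun v : Fin n → ℝ => fun i => v i - μ) (ψ := id)
        (measurable_pi_lambda _ fun i => (measurable_pi_apply i).sub measurable_const)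
        measurable_id
      exact h
    have h := (indepFun_iff_map_prod_eq_prod_map_map
      (measurable_pi_lambda _ hzmeas).aemeasurable
      (measurable_pi_lambda _ hwmeas).aemeasurable).mp hyw'
    rw [hmdef, ← hzvec, ← hwvec]
    exact h
  -- atomic decomposition of mW
  set cst : ENNReal := ((2⁻¹ : ENNReal)^n)^B with hcstdef
  have hrad1 : radPi n = ∑ s0 : Fin n → Bool,
      ((2⁻¹ : ENNReal)^n) • Measure.dirac (fun i => sgnB (s0 i)) := by
    have h := pi_atomic (ι := Fin n) sgnB (fun _ => (2⁻¹ : ENNReal))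
      radMeasure radMeasure_eq_sum
    simpa [radPi, Finset.prod_const, Finset.card_univ] using h
  have hmWatom : mW = ∑ ε : Fin B → Fin n → Bool, cst • Measure.dirac (Wmat n B ε) := by
    have h := pi_atomic (ι := Fin B) (fun s0 : Fin n → Bool => fun i => sgnB (s0 i))
      (fun _ => (2⁻¹ : ENNReal)^n) (radPi n) hrad1
    rw [hmWdef, hcstdef]
    unfold Wmat
    simpa [Finset.prod_const, Finset.card_univ, Wmat] using h
  -- decomposition of pushforwards over the sign atoms
  have hdecomp : ∀ (G : (Fin n → ℝ) × (Fin B → Fin n → ℝ) → Fin (B+1) → ℝ),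
      Measurable G → ∀ s : Set (Fin (B+1) → ℝ), MeasurableSet s →
      Measure.map G m s
        = ∑ ε : Fin B → Fin n → Bool,
            cst * mZ ((fun zz => G (zz, Wmat n B ε)) ⁻¹' s) := by
    intro G hG s hs
    have hGε : ∀ ε, Measurable (fun zz => G (zz, Wmat n B ε)) :=
      fun ε => hG.comp (measurable_id.prodMk measurable_const)
    rw [Measure.map_apply hG hs, hmdef, Measure.prod_apply (hG hs)]
    have hinner : ∀ zz, mW (Prod.mk zz ⁻¹' (G ⁻¹' s))
        = ∑ ε : Fin B → Fin n → Bool,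
            Set.indicator ((fun zz' => G (zz', Wmat n B ε)) ⁻¹' s) (fun _ => cst) zz := by
      intro zz
      rw [hmWatom, Measure.finset_sum_apply]
      refine Finset.sum_congr rfl fun ε _ => ?_
      rw [Measure.smul_apply, smul_eq_mul,
        Measure.dirac_apply' _ (measurable_prodMk_left (hG hs))]
      simp [Set.indicator_apply, mul_ite, mul_one, mul_zero]
    simp only [hinner]
    rw [lintegral_finset_sum _
      (fun ε _ => measurable_const.indicator ((hGε ε) hs))]
    refine Finset.sum_congr rfl fun ε _ => ?_
    rw [lintegral_indicator_const ((hGε ε) hs)]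
  -- swap invariance
  have hswap : ∀ b : Fin B,
      Measure.map (fun p => Fmap n B p ∘ Equiv.swap 0 b.succ) m
        = Measure.map (Fmap n B) m := by
    intro b
    have hcomp : Measurable fun t : Fin (B+1) → ℝ => t ∘ (Equiv.swap 0 b.succ) :=
      measurable_pi_lambda _ fun j => measurable_pi_apply _
    have hG : Measurable fun p => Fmap n B p ∘ Equiv.swap 0 b.succ :=
      hcomp.comp (Fmap_measurable n B)
    ext s hs
    rw [hdecomp _ hG s hs, hdecomp _ (Fmap_measurable n B) s hs]
    have key : ∀ ε : Fin B → Fin n → Bool,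
        mZ ((fun zz => Fmap n B (zz, Wmat n B ε) ∘ Equiv.swap 0 b.succ) ⁻¹' s)
          = mZ ((fun zz => Fmap n B (zz, Wmat n B (flipIdx n B b ε))) ⁻¹' s) := by
      intro ε
      have hflip : Measurable (fun zz : Fin n → ℝ => fun i => sgnB (ε b i) * zz i) :=
        measurable_pi_lambda _ fun i => (measurable_pi_apply i).const_mul _
      have hA : MeasurableSet ((fun zz => Fmap n B (zz, Wmat n B (flipIdx n B b ε))) ⁻¹' s) :=
        ((Fmap_measurable n B).comp (measurable_id.prodMk measurable_const)) hs
      have hset : ((fun zz => Fmap n B (zz, Wmat n B ε) ∘ Equiv.swap 0 b.succ) ⁻¹' s)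
          = (fun zz : Fin n → ℝ => fun i => sgnB (ε b i) * zz i) ⁻¹'
            ((fun zz => Fmap n B (zz, Wmat n B (flipIdx n B b ε))) ⁻¹' s) := by
        ext zz
        simp only [Set.mem_preimage]
        rw [← Fmap_swap n B b zz ε]
      rw [hset]
      have hfi : Measure.map (fun zz : Fin n → ℝ => fun i => sgnB (ε b i) * zz i) mZ = mZ := by
        rw [hmZdef]
        exact flip_inv ν hνsym _ (fun i => sgnB_cases (ε b i))
      conv_rhs => rw [← hfi]
      rw [Measure.map_apply hflip hA]
    calc ∑ ε : Fin B → Fin n → Bool,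
          cst * mZ ((fun zz => Fmap n B (zz, Wmat n B ε) ∘ Equiv.swap 0 b.succ) ⁻¹' s)
        = ∑ ε : Fin B → Fin n → Bool,
            cst * mZ ((fun zz => Fmap n B (zz, Wmat n B (flipIdx n B b ε))) ⁻¹' s) :=
          Finset.sum_congr rfl fun ε _ => by rw [key ε]
      _ = ∑ ε : Fin B → Fin n → Bool,
            cst * mZ ((fun zz => Fmap n B (zz, Wmat n B ε)) ⁻¹' s) :=
          Fintype.sum_equiv ((flipIdx_invol n B b).toPerm) _ _ (fun ε => rfl)
  -- counting sets
  set k : ℕ := ⌊(B:ℝ) * α⌋₊ with hkdef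
  set C : Fin (B+1) → Set (Fin (B+1) → ℝ) := fun j => Ncnt B j ⁻¹' Set.Iic k with hCdef
  have hCmeas : ∀ j, MeasurableSet (C j) :=
    fun j => (Ncnt_measurable B j) measurableSet_Iic
  set L : Measure (Fin (B+1) → ℝ) := Measure.map (Fmap n B) m with hLdef
  haveI : IsProbabilityMeasure L := by
    rw [hLdef]; exact Measure.isProbabilityMeasure_map (Fmap_measurable n B).aemeasurable
  have hCswap : ∀ j : Fin (B+1), L (C j) = L (C 0) := by
    intro j
    refine Fin.cases rfl (fun b => ?_) j
    have hcomp : Measurable fun t : Fin (B+1) → ℝ => t ∘ (Equiv.swap 0 b.succ) :=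
      measurable_pi_lambda _ fun j => measurable_pi_apply _
    have hLsw : Measure.map (fun t : Fin (B+1) → ℝ => t ∘ Equiv.swap 0 b.succ) L = L := by
      rw [hLdef, Measure.map_map hcomp (Fmap_measurable n B)]
      exact hswap b
    conv_lhs => rw [← hLsw]
    rw [Measure.map_apply hcomp (hCmeas b.succ)]
    congr 1
    ext t
    simp only [hCdef, Set.mem_preimage, Set.mem_Iic]
    rw [Ncnt_comp_perm, Equiv.swap_apply_right]
  have hsum : ∑ j : Fin (B+1), L (C j) ≤ ((k : ENNReal) + 1) := by
    calc ∑ j : Fin (B+1), L (C j)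
        = ∫⁻ t, ∑ j : Fin (B+1), (C j).indicator (fun _ => (1:ENNReal)) t ∂L := by
          rw [lintegral_finset_sum _ (fun j _ => measurable_const.indicator (hCmeas j))]
          refine Finset.sum_congr rfl fun j _ => ?_
          rw [lintegral_indicator_const (hCmeas j), one_mul]
      _ ≤ ∫⁻ _t, ((k : ENNReal) + 1) ∂L := by
          refine lintegral_mono fun t => ?_
          have heq : ∑ j : Fin (B+1), (C j).indicator (fun _ => (1:ENNReal)) t
              = (((Finset.univ.filter fun j : Fin (B+1) => Ncnt B j t ≤ k).card : ℕ) : ENNReal) := by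
            rw [Finset.card_filter, Nat.cast_sum]
            refine Finset.sum_congr rfl fun j _ => ?_
            by_cases h : Ncnt B j t ≤ k
            · simp [Set.indicator_apply, hCdef, h]
            · simp [Set.indicator_apply, hCdef, h]
          rw [heq]
          have hcard := Ncnt_card_le B k t
          calc (((Finset.univ.filter fun j : Fin (B+1) => Ncnt B j t ≤ k).card : ℕ) : ENNReal)
              ≤ ((k + 1 : ℕ) : ENNReal) := by exact_mod_cast Nat.cast_le.mpr hcard
            _ = (k : ENNReal) + 1 := by push_cast; ring
      _ = ((k : ENNReal) + 1) := by rw [lintegral_const, measure_univ, mul_one]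
  have hL0 : L (C 0) ≤ ((k : ENNReal) + 1) / ((B : ENNReal) + 1) := by
    have hs2 : ∑ j : Fin (B+1), L (C j) = ((B : ENNReal) + 1) * L (C 0) := by
      rw [Finset.sum_congr rfl (fun j _ => hCswap j), Finset.sum_const, Finset.card_univ,
        Fintype.card_fin, nsmul_eq_mul]
      push_cast
      ring
    rw [ENNReal.le_div_iff_mul_le (Or.inl ?hne0) (Or.inl ?hnetop)]
    case hne0 => simp
    case hnetop => exact ENNReal.add_ne_top.mpr ⟨ENNReal.natCast_ne_top B, ENNReal.one_ne_top⟩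
    rw [mul_comm, ← hs2]
    exact hsum
  -- event inclusion
  have hsub : {ω | mcQuantile n B (fun i => y i ω - μ) (fun b => w b ω) α <
      (∑ i, y i ω) / n - μ} ⊆ Z ⁻¹' (Fmap n B ⁻¹' C 0) := by
    intro ω hω
    simp only [Set.mem_setOf_eq] at hω
    have hcount := quantile_count_le (n := n) hB0 α hα0 hα1
      (fun b => ∑ i, w b ω i * (y i ω - μ)) ((∑ i, y i ω) / n - μ) hω
    have ht0eq : (∑ i, y i ω) / n - μ = (∑ i, (y i ω - μ)) / n := by
      rw [Finset.sum_sub_distrib, Finset.sum_const, Finset.card_univ, Fintype.card_fin,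
        sub_div, nsmul_eq_mul, mul_div_cancel_left₀ _ (ne_of_gt hnR)]
    have hiff : ∀ b : Fin B,
        ((∑ i, (y i ω - μ)) ≤ ∑ i, w b ω i * (y i ω - μ))
          ↔ ((∑ i, y i ω) / n - μ ≤ (∑ i, w b ω i * (y i ω - μ)) / n) := by
      intro b
      rw [ht0eq]
      exact (div_le_div_iff_of_pos_right hnR).symm
    have hk : (Finset.univ.filter fun b : Fin B =>
        (∑ i, (y i ω - μ)) ≤ ∑ i, w b ω i * (y i ω - μ)).card ≤ k := by
      rw [hkdef]
      apply Nat.le_floor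
      rw [Finset.filter_congr (fun b _ => hiff b)]
      exact hcount
    have hmem : Ncnt B 0 (Fmap n B (Z ω)) ≤ k := by
      rw [Ncnt_zero]
      have hfe : (Finset.univ.filter fun b : Fin B =>
            Fmap n B (Z ω) 0 ≤ Fmap n B (Z ω) b.succ)
          = Finset.univ.filter fun b : Fin B =>
            (∑ i, (y i ω - μ)) ≤ ∑ i, w b ω i * (y i ω - μ) := by
        refine Finset.filter_congr fun b _ => ?_
        simp only [hZdef, Fmap, Fin.cons_zero, Fin.cons_succ]
      rw [hfe]
      exact hk
    simp only [Set.mem_preimage, hCdef, Set.mem_Iic]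
    exact hmem
  -- conclusion
  calc P {ω | mcQuantile n B (fun i => y i ω - μ) (fun b => w b ω) α <
        (∑ i, y i ω) / n - μ}
      ≤ P (Z ⁻¹' (Fmap n B ⁻¹' C 0)) := measure_mono hsub
    _ = Measure.map Z P (Fmap n B ⁻¹' C 0) :=
        (Measure.map_apply hZmeas ((Fmap_measurable n B) (hCmeas 0))).symm
    _ = L (C 0) := by
        rw [hmeq, hLdef, Measure.map_apply (Fmap_measurable n B) (hCmeas 0)]
    _ ≤ ((k : ENNReal) + 1) / ((B : ENNReal) + 1) := hL0
    _ = ENNReal.ofReal (((⌊(B : ℝ) * α⌋ : ℝ) + 1) / ((B : ℝ) + 1)) := by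
        have h0 : (0:ℤ) ≤ ⌊(B:ℝ) * α⌋ := Int.floor_nonneg.mpr (by positivity)
        have hfl : ((⌊(B:ℝ) * α⌋ : ℤ) : ℝ) = (k : ℝ) := by
          rw [hkdef, ← Int.floor_toNat]
          exact_mod_cast (congrArg (Int.cast : ℤ → ℝ) (Int.toNat_of_nonneg h0)).symm
        rw [ENNReal.ofReal_div_of_pos (by positivity), hfl,
          ENNReal.ofReal_add (by positivity) zero_le_one,
          ENNReal.ofReal_add (by positivity) zero_le_one,
          ENNReal.ofReal_natCast, ENNReal.ofReal_natCast, ENNReal.ofReal_one]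
end

section
/- Let β ∈ [1,2], c, A, B > 0, and let X be a real random variable such that P(|X| ≥ t) ≤ 2·exp( −c·min( t^2/A^2 , t^β/B^β ) ) for all t ≥ 0. Then for every real p ≥ 2, ( E|X|^p )^{1/p} ≤ max( sqrt(2/c), 4/(cβ)^{1/β} ) · ( √p·A + p^{1/β}·B ). -/
open MeasureTheory Real
open Set

lemma int_exp_half : ∫ t in Ioi (0:ℝ), Real.exp (-(1/2) * t) = 2 := by
  have h := integral_rpow_mul_exp_neg_mul_rpow (p:=1) (q:=0) (b:=1/2) one_pos
    (by norm_num) (by norm_num)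
  simp only [Real.rpow_zero, one_mul, Real.rpow_one, zero_add, Real.Gamma_one,
    mul_one, div_one] at h
  rw [h, Real.rpow_neg_one]
  norm_num

lemma gamma_bound {x : ℝ} (hx : 1 ≤ x) :
    Real.Gamma (x + 1) ≤ 2 * ((2*x) ^ x * Real.exp (-x)) := by
  have hx0 : (0:ℝ) < x := by linarith
  rw [Real.Gamma_eq_integral (by linarith : (0:ℝ) < x + 1)]
  have key : ∀ t ∈ Ioi (0:ℝ), Real.exp (-t) * t ^ (x + 1 - 1) ≤
      ((2*x) ^ x * Real.exp (-x)) * Real.exp (-(1/2) * t) := by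
    intro t ht
    have ht0 : (0:ℝ) < t := ht
    have h2x : (0:ℝ) < 2 * x := by linarith
    rw [add_sub_cancel_right, Real.rpow_def_of_pos ht0, Real.rpow_def_of_pos h2x,
      ← Real.exp_add, ← Real.exp_add, ← Real.exp_add]
    apply Real.exp_le_exp.2
    have hlog : Real.log (t / (2*x)) ≤ t / (2*x) - 1 :=
      Real.log_le_sub_one_of_pos (by positivity)
    rw [Real.log_div ht0.ne' h2x.ne'] at hlog
    have := mul_le_mul_of_nonneg_left hlog hx0.le
    have hxt : x * (t / (2*x)) = t / 2 := by field_simp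
    nlinarith [this]
  calc ∫ t in Ioi (0:ℝ), Real.exp (-t) * t ^ (x + 1 - 1)
      ≤ ∫ t in Ioi (0:ℝ), ((2*x) ^ x * Real.exp (-x)) * Real.exp (-(1/2) * t) := by
        apply setIntegral_mono_on
        · exact Real.GammaIntegral_convergent (by linarith)
        · exact (exp_neg_integrableOn_Ioi 0 (by norm_num : (0:ℝ) < 1/2)).const_mul _
        · exact measurableSet_Ioi
        · exact key
    _ = 2 * ((2*x) ^ x * Real.exp (-x)) := by
        rw [MeasureTheory.integral_const_mul, int_exp_half]; ring

lemma rpow_add_le {u v p : ℝ} (hu : 0 ≤ u) (hv : 0 ≤ v) (hp : 1 ≤ p) :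
    u ^ p + v ^ p ≤ (u + v) ^ p := by
  rcases eq_or_lt_of_le (by positivity : (0:ℝ) ≤ u + v) with h | h
  · have hu0 : u = 0 := by linarith
    have hv0 : v = 0 := by linarith
    simp [hu0, hv0, Real.zero_rpow (by linarith : p ≠ 0)]
  · have h1 : u ^ p ≤ u * (u+v) ^ (p-1) := by
      calc u ^ p = u ^ (1 + (p-1)) := by ring_nf
        _ = u * u ^ (p-1) := by rw [Real.rpow_add' hu (by linarith), Real.rpow_one]
        _ ≤ u * (u+v) ^ (p-1) := by
            exact mul_le_mul_of_nonneg_left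
              (Real.rpow_le_rpow hu (by linarith) (by linarith)) hu
    have h2 : v ^ p ≤ v * (u+v) ^ (p-1) := by
      calc v ^ p = v ^ (1 + (p-1)) := by ring_nf
        _ = v * v ^ (p-1) := by rw [Real.rpow_add' hv (by linarith), Real.rpow_one]
        _ ≤ v * (u+v) ^ (p-1) := by
            exact mul_le_mul_of_nonneg_left
              (Real.rpow_le_rpow hv (by linarith) (by linarith)) hv
    calc u ^ p + v ^ p ≤ (u + v) * (u+v) ^ (p-1) := by linarith
      _ = (u + v) ^ p := by
          rw [← Real.rpow_one_add' h.le (by linarith)]; ring_nf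

lemma exp_neg_rpow (x : ℝ) : (Real.exp (-1)) ^ x = Real.exp (-x) := by
  rw [Real.rpow_def_of_pos (Real.exp_pos _), Real.log_exp]; ring_nf

lemma key_bound {w x r : ℝ} (hx : 1 ≤ x) (hw : 0 < w) (hr : 4 * x * w ≤ r) :
    2 * Real.Gamma (x + 1) * w ^ x ≤ r ^ x := by
  have hx0 : (0:ℝ) < x := by linarith
  have he : (2:ℝ) ≤ Real.exp 1 := by
    have := Real.exp_one_gt_d9; linarith
  have hG := gamma_bound hx
  have hcomb : (2*x) ^ x * Real.exp (-x) * w ^ x = (2 * x * Real.exp (-1) * w) ^ x := by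
    rw [← exp_neg_rpow, ← Real.mul_rpow (by positivity) (Real.exp_pos _).le,
      ← Real.mul_rpow (by positivity) hw.le]
  have hGpos : 0 ≤ Real.Gamma (x+1) := Real.Gamma_nonneg_of_nonneg (by linarith)
  have h1 : 2 * Real.Gamma (x + 1) * w ^ x ≤ 4 * (2 * x * Real.exp (-1) * w) ^ x := by
    have hwx : (0:ℝ) ≤ w ^ x := by positivity
    calc 2 * Real.Gamma (x + 1) * w ^ x
        ≤ 2 * (2 * ((2*x) ^ x * Real.exp (-x))) * w ^ x := by
          apply mul_le_mul_of_nonneg_right _ hwx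
          linarith
      _ = 4 * ((2*x) ^ x * Real.exp (-x) * w ^ x) := by ring
      _ = 4 * (2 * x * Real.exp (-1) * w) ^ x := by rw [hcomb]
  have h2 : ((4:ℝ) * x * w) ^ x = (2 * Real.exp 1) ^ x * (2 * x * Real.exp (-1) * w) ^ x := by
    rw [← Real.mul_rpow (by positivity) (by positivity)]
    congr 1
    have : Real.exp 1 * Real.exp (-1) = 1 := by
      rw [← Real.exp_add]; norm_num
    linear_combination (-4*x*w) * this
  have h3 : (4:ℝ) ≤ (2 * Real.exp 1) ^ x := by
    calc (4:ℝ) ≤ 2 * Real.exp 1 := by linarith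
      _ = (2 * Real.exp 1) ^ (1:ℝ) := (Real.rpow_one _).symm
      _ ≤ (2 * Real.exp 1) ^ x := Real.rpow_le_rpow_of_exponent_le (by linarith) hx
  have h4 : ((4:ℝ) * x * w) ^ x ≤ r ^ x :=
    Real.rpow_le_rpow (by positivity) hr (by linarith)
  have h5 : (0:ℝ) ≤ (2 * x * Real.exp (-1) * w) ^ x := by positivity
  nlinarith [h1, h2, h3, h4, h5]

lemma final_real {β c A B p : ℝ} (hβ1 : 1 ≤ β) (hβ2 : β ≤ 2) (hc : 0 < c)
    (hA : 0 < A) (hB : 0 < B) (hp : 2 ≤ p) :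
    p * (2 * ((c/A^2) ^ (-p/2) * (1/2) * Real.Gamma (p/2)) +
         2 * ((c/B^β) ^ (-p/β) * (1/β) * Real.Gamma (p/β)))
      ≤ (max (Real.sqrt (2/c)) (4/(c*β)^(1/β)) * (Real.sqrt p * A + p^(1/β) * B)) ^ p := by
  have hβ0 : (0:ℝ) < β := by linarith
  have hp0 : (0:ℝ) < p := by linarith
  set M : ℝ := max (Real.sqrt (2/c)) (4/(c*β)^(1/β)) with hMdef
  have hcβ : (0:ℝ) < (c*β) ^ (1/β) := Real.rpow_pos_of_pos (by positivity) _
  have hM0 : (0:ℝ) < M := lt_of_lt_of_le (by positivity) (le_max_right _ _)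
  have hb1 : (0:ℝ) < c / A^2 := by positivity
  have hBβ : (0:ℝ) < B ^ β := Real.rpow_pos_of_pos hB _
  have hb2 : (0:ℝ) < c / B^β := by positivity
  set x : ℝ := p/2 with hxdef
  set y : ℝ := p/β with hydef
  have hx1 : (1:ℝ) ≤ x := by rw [hxdef]; linarith
  have hy1 : (1:ℝ) ≤ y := by rw [hydef, le_div_iff₀ hβ0]; linarith
  have hy0 : (0:ℝ) < y := by linarith
  have hx0 : (0:ℝ) < x := by linarith
  -- claim 1
  have c1 : p * (2 * ((c/A^2) ^ (-p/2) * (1/2) * Real.Gamma (p/2)))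
      ≤ (M * (Real.sqrt p * A)) ^ p := by
    have hrw : p * (2 * ((c/A^2) ^ (-p/2) * (1/2) * Real.Gamma (p/2)))
        = 2 * Real.Gamma (x + 1) * ((c/A^2)⁻¹) ^ x := by
      rw [Real.Gamma_add_one hx0.ne', Real.inv_rpow hb1.le, ← Real.rpow_neg hb1.le]
      rw [hxdef]
      ring_nf
    rw [hrw]
    have hMsq : 2/c ≤ M^2 := by
      have h1 : Real.sqrt (2/c) ≤ M := le_max_left _ _
      nlinarith [Real.sq_sqrt (by positivity : (0:ℝ) ≤ 2/c), Real.sqrt_nonneg (2/c)]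
    have hr : 4 * x * (c/A^2)⁻¹ ≤ (M * (Real.sqrt p * A)) ^ 2 := by
      have hs : Real.sqrt p ^ 2 = p := Real.sq_sqrt hp0.le
      have : (M * (Real.sqrt p * A)) ^ 2 = M^2 * p * A^2 := by
        rw [mul_pow, mul_pow, hs]; ring
      rw [this]
      have : 4 * x * (c/A^2)⁻¹ = (2/c) * p * A^2 := by
        rw [hxdef]; field_simp; ring
      rw [this]
      have hpA : (0:ℝ) < p * A^2 := by positivity
      nlinarith [hMsq, hpA]
    have hkey := key_bound hx1 (by positivity : (0:ℝ) < (c/A^2)⁻¹) hr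
    refine hkey.trans (le_of_eq ?_)
    rw [← Real.rpow_natCast (M * (Real.sqrt p * A)) 2, ← Real.rpow_mul (by positivity)]
    norm_num
    congr 1
    rw [hxdef]; ring
  -- claim 2
  have c2 : p * (2 * ((c/B^β) ^ (-p/β) * (1/β) * Real.Gamma (p/β)))
      ≤ (M * (p^(1/β) * B)) ^ p := by
    have hrw : p * (2 * ((c/B^β) ^ (-p/β) * (1/β) * Real.Gamma (p/β)))
        = 2 * Real.Gamma (y + 1) * ((c/B^β)⁻¹) ^ y := by
      rw [Real.Gamma_add_one hy0.ne', Real.inv_rpow hb2.le, ← Real.rpow_neg hb2.le]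
      rw [hydef]
      field_simp
    rw [hrw]
    have hlow : 4/(c*β)^(1/β) * (p^(1/β) * B) ≤ M * (p^(1/β) * B) := by
      apply mul_le_mul_of_nonneg_right (le_max_right _ _) (by positivity)
    have hlowβ : (4/(c*β)^(1/β) * (p^(1/β) * B)) ^ β = 4^β * p * B^β / (c*β) := by
      rw [Real.mul_rpow (by positivity) (by positivity),
          Real.mul_rpow (by positivity) hB.le,
          Real.div_rpow (by norm_num) hcβ.le]
      rw [← Real.rpow_mul (by positivity : (0:ℝ) ≤ c*β),
          ← Real.rpow_mul hp0.le]
      rw [one_div, inv_mul_cancel₀ hβ0.ne', Real.rpow_one, Real.rpow_one]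
      ring
    have h4β : (4:ℝ) ≤ 4^β := by
      calc (4:ℝ) = 4 ^ (1:ℝ) := (Real.rpow_one _).symm
        _ ≤ 4^β := Real.rpow_le_rpow_of_exponent_le (by norm_num) hβ1
    have hr : 4 * y * (c/B^β)⁻¹ ≤ (M * (p^(1/β) * B)) ^ β := by
      have h1 : 4 * y * (c/B^β)⁻¹ = 4 * p * B^β / (c*β) := by
        rw [hydef]; field_simp
      have h2 : (4/(c*β)^(1/β) * (p^(1/β) * B)) ^ β ≤ (M * (p^(1/β) * B)) ^ β :=
        Real.rpow_le_rpow (by positivity) hlow hβ0.le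
      rw [h1]
      refine le_trans ?_ (hlowβ ▸ h2)
      have hpB : (0:ℝ) < p * B^β / (c*β) := by positivity
      calc 4 * p * B^β / (c*β) = 4 * (p * B^β / (c*β)) := by ring
        _ ≤ 4^β * (p * B^β / (c*β)) := mul_le_mul_of_nonneg_right h4β hpB.le
        _ = 4^β * p * B^β / (c*β) := by ring
    have hkey := key_bound hy1 (by positivity : (0:ℝ) < (c/B^β)⁻¹) hr
    refine hkey.trans (le_of_eq ?_)
    rw [← Real.rpow_mul (by positivity)]
    congr 1
    rw [hydef]; field_simp
  calc p * (2 * ((c/A^2) ^ (-p/2) * (1/2) * Real.Gamma (p/2)) +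
         2 * ((c/B^β) ^ (-p/β) * (1/β) * Real.Gamma (p/β)))
      = p * (2 * ((c/A^2) ^ (-p/2) * (1/2) * Real.Gamma (p/2)))
        + p * (2 * ((c/B^β) ^ (-p/β) * (1/β) * Real.Gamma (p/β))) := by ring
    _ ≤ (M * (Real.sqrt p * A)) ^ p + (M * (p^(1/β) * B)) ^ p := add_le_add c1 c2
    _ ≤ (M * (Real.sqrt p * A) + M * (p^(1/β) * B)) ^ p :=
        rpow_add_le (by positivity) (by positivity) (by linarith)
    _ = (M * (Real.sqrt p * A + p^(1/β) * B)) ^ p := by rw [mul_add]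

/-- A mixed Gaussian–Weibull tail bound implies the corresponding `L^p`-moment bound. -/
theorem mixed_tail_to_moment
    {Ω : Type*} [MeasurableSpace Ω] (P : Measure Ω) [IsProbabilityMeasure P]
    (β c A B : ℝ) (hβ1 : 1 ≤ β) (hβ2 : β ≤ 2) (hc : 0 < c) (hA : 0 < A) (hB : 0 < B)
    (X : Ω → ℝ) (hX : Measurable X)
    (htail : ∀ t : ℝ, 0 ≤ t →
      P {ω | t ≤ |X ω|} ≤
        ENNReal.ofReal (2 * Real.exp (-c * min (t ^ 2 / A ^ 2) (t ^ β / B ^ β)))) :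
    ∀ p : ℝ, 2 ≤ p →
      (∫⁻ ω, ENNReal.ofReal (|X ω| ^ p) ∂P) ^ (1 / p) ≤
        ENNReal.ofReal (max (Real.sqrt (2 / c)) (4 / (c * β) ^ (1 / β)) *
          (Real.sqrt p * A + p ^ (1 / β) * B)) := by
  intro p hp
  have hp0 : (0:ℝ) < p := by linarith
  have hβ0 : (0:ℝ) < β := by linarith
  set M : ℝ := max (Real.sqrt (2 / c)) (4 / (c * β) ^ (1 / β)) with hMdef
  set T : ℝ := Real.sqrt p * A + p ^ (1 / β) * B with hTdef
  have hcβ : (0:ℝ) < (c*β) ^ (1/β) := Real.rpow_pos_of_pos (by positivity) _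
  have hM0 : (0:ℝ) < M := lt_of_lt_of_le (by positivity) (le_max_right _ _)
  have hsp : (0:ℝ) < Real.sqrt p := Real.sqrt_pos.2 hp0
  have hpβ : (0:ℝ) < p ^ (1/β) := Real.rpow_pos_of_pos hp0 _
  have hT0 : (0:ℝ) < T := by rw [hTdef]; positivity
  suffices h : (∫⁻ ω, ENNReal.ofReal (|X ω| ^ p) ∂P) ≤ ENNReal.ofReal ((M * T) ^ p) by
    calc (∫⁻ ω, ENNReal.ofReal (|X ω| ^ p) ∂P) ^ (1/p)
        ≤ (ENNReal.ofReal ((M*T) ^ p)) ^ (1/p) := ENNReal.rpow_le_rpow h (by positivity)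
      _ = ENNReal.ofReal (M*T) := by
          rw [← ENNReal.ofReal_rpow_of_pos (by positivity : (0:ℝ) < M*T),
            ← ENNReal.rpow_mul, mul_one_div, div_self hp0.ne', ENNReal.rpow_one]
  -- layer cake
  have lc := MeasureTheory.lintegral_rpow_eq_lintegral_meas_le_mul P
    (f := fun ω => |X ω|) (Filter.Eventually.of_forall fun ω => abs_nonneg _)
    hX.abs.aemeasurable hp0
  rw [lc]
  set b1 : ℝ := c / A^2 with hb1def
  have hBβ : (0:ℝ) < B ^ β := Real.rpow_pos_of_pos hB _
  set b2 : ℝ := c / B^β with hb2def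
  have hb1 : (0:ℝ) < b1 := by rw [hb1def]; positivity
  have hb2 : (0:ℝ) < b2 := by rw [hb2def]; positivity
  set g1 : ℝ → ℝ := fun t => 2 * (t ^ (p-1) * Real.exp (-b1 * t ^ (2:ℝ))) with hg1def
  set g2 : ℝ → ℝ := fun t => 2 * (t ^ (p-1) * Real.exp (-b2 * t ^ β)) with hg2def
  -- pointwise bound
  have hpt : ∀ t ∈ Set.Ioi (0:ℝ), P {ω | t ≤ |X ω|} * ENNReal.ofReal (t ^ (p-1))
      ≤ ENNReal.ofReal (g1 t) + ENNReal.ofReal (g2 t) := by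
    intro t ht
    have ht0 : (0:ℝ) < t := ht
    have htp : (0:ℝ) ≤ t ^ (p-1) := Real.rpow_nonneg ht0.le _
    have h1 : P {ω | t ≤ |X ω|} * ENNReal.ofReal (t^(p-1)) ≤
        ENNReal.ofReal (2 * Real.exp (-c * min (t^2/A^2) (t^β/B^β)) * t^(p-1)) := by
      rw [ENNReal.ofReal_mul (by positivity)]
      exact mul_le_mul_left (htail t ht0.le) _
    refine h1.trans ?_
    have ht2 : t ^ (2:ℝ) = t ^ (2:ℕ) := by
      rw [show ((2:ℝ)) = ((2:ℕ):ℝ) by norm_num, Real.rpow_natCast]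
    rcases min_cases (t^2/A^2) (t^β/B^β) with ⟨hmin, _⟩ | ⟨hmin, _⟩
    · refine le_trans (le_of_eq ?_) le_self_add
      congr 1
      rw [hmin, hg1def]
      simp only []
      rw [ht2]
      field_simp
      rw [hb1def]
      ring
    · refine le_trans (le_of_eq ?_) le_add_self
      congr 1
      rw [hmin, hg2def]
      simp only []
      field_simp
      rw [hb2def]
      ring
  have mg1 : Measurable fun t => ENNReal.ofReal (g1 t) := by
    apply ENNReal.measurable_ofReal.comp
    fun_prop
  have mg2 : Measurable fun t => ENNReal.ofReal (g2 t) := by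
    apply ENNReal.measurable_ofReal.comp
    fun_prop
  have step1 : (∫⁻ t in Set.Ioi (0:ℝ), P {ω | t ≤ |X ω|} * ENNReal.ofReal (t ^ (p-1)))
      ≤ (∫⁻ t in Set.Ioi (0:ℝ), ENNReal.ofReal (g1 t))
        + ∫⁻ t in Set.Ioi (0:ℝ), ENNReal.ofReal (g2 t) := by
    rw [← lintegral_add_left mg1]
    exact setLIntegral_mono (mg1.add mg2) hpt
  -- integrability and values
  have hi1 : IntegrableOn g1 (Set.Ioi 0) :=
    ((integrableOn_rpow_mul_exp_neg_mul_rpow (by linarith : (-1:ℝ) < p-1)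
      (by norm_num : (0:ℝ) < 2) hb1).const_mul 2)
  have hi2 : IntegrableOn g2 (Set.Ioi 0) :=
    ((integrableOn_rpow_mul_exp_neg_mul_rpow (by linarith : (-1:ℝ) < p-1) hβ0 hb2).const_mul 2)
  have nn1 : 0 ≤ᵐ[volume.restrict (Set.Ioi (0:ℝ))] g1 := by
    filter_upwards [ae_restrict_mem measurableSet_Ioi] with t ht
    have : (0:ℝ) < t := ht
    rw [hg1def]; positivity
  have nn2 : 0 ≤ᵐ[volume.restrict (Set.Ioi (0:ℝ))] g2 := by
    filter_upwards [ae_restrict_mem measurableSet_Ioi] with t ht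
    have : (0:ℝ) < t := ht
    rw [hg2def]; positivity
  have e1 : (∫⁻ t in Set.Ioi (0:ℝ), ENNReal.ofReal (g1 t))
      = ENNReal.ofReal (∫ t in Set.Ioi (0:ℝ), g1 t) :=
    (MeasureTheory.ofReal_integral_eq_lintegral_ofReal hi1 nn1).symm
  have e2 : (∫⁻ t in Set.Ioi (0:ℝ), ENNReal.ofReal (g2 t))
      = ENNReal.ofReal (∫ t in Set.Ioi (0:ℝ), g2 t) :=
    (MeasureTheory.ofReal_integral_eq_lintegral_ofReal hi2 nn2).symm
  have inn1 : 0 ≤ ∫ t in Set.Ioi (0:ℝ), g1 t :=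
    setIntegral_nonneg measurableSet_Ioi fun t ht => by
      have : (0:ℝ) < t := ht; rw [hg1def]; positivity
  have inn2 : 0 ≤ ∫ t in Set.Ioi (0:ℝ), g2 t :=
    setIntegral_nonneg measurableSet_Ioi fun t ht => by
      have : (0:ℝ) < t := ht; rw [hg2def]; positivity
  have v1 : ∫ t in Set.Ioi (0:ℝ), g1 t = 2 * (b1 ^ (-p/2) * (1/2) * Real.Gamma (p/2)) := by
    rw [hg1def]
    rw [MeasureTheory.integral_const_mul]
    rw [integral_rpow_mul_exp_neg_mul_rpow two_pos (by linarith : (-1:ℝ) < p - 1) hb1]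
    rw [show p - 1 + 1 = p by ring]
  have v2 : ∫ t in Set.Ioi (0:ℝ), g2 t = 2 * (b2 ^ (-p/β) * (1/β) * Real.Gamma (p/β)) := by
    rw [hg2def]
    rw [MeasureTheory.integral_const_mul]
    rw [integral_rpow_mul_exp_neg_mul_rpow hβ0 (by linarith : (-1:ℝ) < p - 1) hb2]
    rw [show p - 1 + 1 = p by ring]
  calc ENNReal.ofReal p * ∫⁻ t in Set.Ioi (0:ℝ), P {ω | t ≤ |X ω|} * ENNReal.ofReal (t ^ (p-1))
      ≤ ENNReal.ofReal p * (ENNReal.ofReal (∫ t in Set.Ioi (0:ℝ), g1 t)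
          + ENNReal.ofReal (∫ t in Set.Ioi (0:ℝ), g2 t)) := by
        rw [← e1, ← e2]
        exact mul_le_mul_right step1 _
    _ = ENNReal.ofReal (p * ((∫ t in Set.Ioi (0:ℝ), g1 t) + ∫ t in Set.Ioi (0:ℝ), g2 t)) := by
        rw [← ENNReal.ofReal_add inn1 inn2, ← ENNReal.ofReal_mul hp0.le]
    _ ≤ ENNReal.ofReal ((M * T) ^ p) := by
        apply ENNReal.ofReal_le_ofReal
        rw [v1, v2, hb1def, hb2def, hMdef, hTdef]
        exact final_real hβ1 hβ2 hc hA hB hp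
end

section
/- Let β > 0, C > 0, and A, B ≥ 0, and let Z be a real random variable such that ( E|Z|^p )^{1/p} ≤ C( √p·A + p^{1/β}·B ) for every real p ≥ 2. Then for every α ∈ (0, e^{−2}), P( |Z| > e·C( (log(1/α))^{1/2}·A + (log(1/α))^{1/β}·B ) ) ≤ α. -/
open MeasureTheory Real
open scoped ENNReal

/-- Mixed moment bounds for all `p ≥ 2` imply a mixed Gaussian–Weibull tail bound. -/
theorem moment_to_tail
    {Ω : Type*} [MeasurableSpace Ω] (P : Measure Ω) [IsProbabilityMeasure P]
    (β C A B : ℝ) (hβ : 0 < β) (hC : 0 < C) (hA : 0 ≤ A) (hB : 0 ≤ B)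
    (Z : Ω → ℝ) (hZ : Measurable Z)
    (hmom : ∀ p : ℝ, 2 ≤ p →
      (∫⁻ ω, ENNReal.ofReal (|Z ω| ^ p) ∂P) ^ (1 / p) ≤
        ENNReal.ofReal (C * (Real.sqrt p * A + p ^ (1 / β) * B))) :
    ∀ α : ℝ, 0 < α → α < Real.exp (-2) →
      P {ω | Real.exp 1 * C * (Real.sqrt (Real.log (1 / α)) * A +
          Real.log (1 / α) ^ (1 / β) * B) < |Z ω|} ≤ ENNReal.ofReal α := by
  intro α hα hα2
  set p := Real.log (1 / α) with hpdef
  have hp2 : 2 ≤ p := by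
    rw [hpdef, Real.le_log_iff_exp_le (by positivity)]
    rw [Real.exp_neg] at hα2
    rw [le_div_iff₀ hα]
    nlinarith [Real.exp_pos 2, (mul_lt_mul_iff_of_pos_right (Real.exp_pos 2)).mpr hα2,
      mul_inv_cancel₀ (Real.exp_pos 2).ne']
  have hp0 : 0 < p := lt_of_lt_of_le two_pos hp2
  set M := C * (Real.sqrt p * A + p ^ (1 / β) * B) with hMdef
  have hM0 : 0 ≤ M := by
    apply mul_nonneg hC.le
    have := Real.sqrt_nonneg p
    have := Real.rpow_nonneg hp0.le (1 / β)
    positivity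
  set f : Ω → ℝ≥0∞ := fun ω => ENNReal.ofReal (|Z ω| ^ p) with hfdef
  have hfmeas : Measurable f := by
    apply ENNReal.measurable_ofReal.comp
    measurability
  have hint : ∫⁻ ω, f ω ∂P ≤ ENNReal.ofReal M ^ p := by
    calc ∫⁻ ω, f ω ∂P = ((∫⁻ ω, f ω ∂P) ^ (1 / p)) ^ p := by
          rw [← ENNReal.rpow_mul, one_div, inv_mul_cancel₀ hp0.ne', ENNReal.rpow_one]
      _ ≤ ENNReal.ofReal M ^ p := ENNReal.rpow_le_rpow (hmom p hp2) hp0.le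
  rcases eq_or_lt_of_le hM0 with hM | hM
  · -- M = 0 : Z = 0 a.e.
    have hz : ∫⁻ ω, f ω ∂P = 0 := by
      refine le_antisymm (le_trans hint ?_) zero_le
      rw [← hM, ENNReal.ofReal_zero, ENNReal.zero_rpow_of_pos hp0]
    have hae : P {ω | f ω ≠ 0} = 0 := (lintegral_eq_zero_iff hfmeas).mp hz
    refine le_trans (le_trans (measure_mono ?_) hae.le) zero_le
    intro ω hω
    simp only [Set.mem_setOf_eq] at hω ⊢
    have hZpos : 0 < |Z ω| := by
      have he : Real.exp 1 * C * (Real.sqrt p * A + p ^ (1 / β) * B) = Real.exp 1 * M := by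
        rw [hMdef, mul_assoc]
      rw [he, ← hM, mul_zero] at hω
      exact hω
    have : 0 < |Z ω| ^ p := Real.rpow_pos_of_pos hZpos p
    simp only [hfdef, ne_eq, ENNReal.ofReal_eq_zero, not_le]
    exact this
  · -- M > 0
    have heM : 0 < Real.exp 1 * M := by positivity
    have hεpos : 0 < (Real.exp 1 * M) ^ p := Real.rpow_pos_of_pos heM p
    have hsub : {ω | Real.exp 1 * C * (Real.sqrt p * A + p ^ (1 / β) * B) < |Z ω|} ⊆
        {ω | ENNReal.ofReal ((Real.exp 1 * M) ^ p) ≤ f ω} := by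
      intro ω hω
      simp only [Set.mem_setOf_eq] at hω ⊢
      have h1 : Real.exp 1 * M < |Z ω| := by rw [hMdef]; linarith [hω, mul_assoc (Real.exp 1) C (Real.sqrt p * A + p ^ (1 / β) * B)]
      exact ENNReal.ofReal_le_ofReal (Real.rpow_le_rpow heM.le h1.le hp0.le)
    calc P _ ≤ P {ω | ENNReal.ofReal ((Real.exp 1 * M) ^ p) ≤ f ω} := measure_mono hsub
      _ ≤ (∫⁻ ω, f ω ∂P) / ENNReal.ofReal ((Real.exp 1 * M) ^ p) :=
          meas_ge_le_lintegral_div hfmeas.aemeasurable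
            (by simp [ENNReal.ofReal_eq_zero, not_le, hεpos]) ENNReal.ofReal_ne_top
      _ ≤ ENNReal.ofReal (M ^ p) / ENNReal.ofReal ((Real.exp 1 * M) ^ p) := by
          apply ENNReal.div_le_div_right
          rw [← ENNReal.ofReal_rpow_of_nonneg hM0 hp0.le]
          exact hint
      _ = ENNReal.ofReal α := by
          rw [← ENNReal.ofReal_div_of_pos hεpos]
          congr 1
          rw [Real.mul_rpow (Real.exp_pos 1).le hM0, Real.exp_one_rpow]
          rw [div_eq_iff (by positivity)]
          have : α * Real.exp p = 1 := by
            rw [hpdef, Real.exp_log (by positivity), mul_one_div, div_self hα.ne']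
          rw [← mul_assoc, this, one_mul]
end
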